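/- arXiv:1406.5776 — 11 statements merged into one kernel-verified Lean document; each statement's English description precedes it below -/
import Mathlib

section
/- For every real α > −1, every real r > 0 and every integer i ≥ 0, ∫_0^∞ q^{α+r} e^{−q} (L_i^α(q))^2 dq = ∑_{k=0}^i C(i,k)·(−1)^{i−k}·(Γ(i+α+1)/Γ(k+α+1)) · (∏_{j=1}^i (r+k+1−j)) · Γ(α+r+k+1). -/
/-!
Expanding the square turns the integral into `∑_{k,m} c_k c_m Γ(α+r+k+m+1)`, with `c_k` the
coefficients of `L_i^α`. Fix `k`, put `t = α+r+k` and write `(x)ₙ = x(x-1)⋯(x-n+1)`.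
Since `Γ(i+α+1)/Γ(m+α+1) = (α+i)_{i-m}` and `Γ(t+m+1) = (-1)^m (-(t+1))ₘ Γ(t+1)`, the sum over
`m` is `(-1)^i Γ(t+1)` times a Chu–Vandermonde sum, which collapses to
`(-1)^i (α+i-t-1)ᵢ Γ(t+1) = (t-α)ᵢ Γ(t+1)`.
-/

open Finset Polynomial Real MeasureTheory

/-- The monic generalised Laguerre polynomial
`L_i^α(q) = ∑_{k=0}^i C(i,k)(−1)^{i−k}(Γ(i+α+1)/Γ(k+α+1)) q^k`. -/
noncomputable def laguerreL (i : ℕ) (α : ℝ) (q : ℝ) : ℝ :=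
  ∑ k ∈ Finset.range (i + 1),
    (i.choose k : ℝ) * (-1 : ℝ) ^ (i - k) *
      (Real.Gamma ((i : ℝ) + α + 1) / Real.Gamma ((k : ℝ) + α + 1)) * q ^ k

theorem descPochhammer_eval_add {R : Type*} [CommRing R] (r s : R) (n : ℕ) :
    (descPochhammer R n).eval (r + s) = ∑ m ∈ range (n + 1),
      n.choose m * ((descPochhammer R m).eval r * (descPochhammer R (n - m)).eval s) := by
  have hsm : ∀ k (x : R), (descPochhammer ℤ k).smeval x = (descPochhammer R k).eval x := by
    intro k x
    rw [← aeval_eq_smeval, aeval_def, eval₂_eq_eval_map, algebraMap_int_eq, descPochhammer_map]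
  rw [← Nat.sum_antidiagonal_eq_sum_range_succ (fun i j =>
    (n.choose i : R) * ((descPochhammer R i).eval r * (descPochhammer R j).eval s))]
  simpa only [hsm] using Ring.descPochhammer_smeval_add n (Commute.all r s)

theorem Real.Gamma_add_nat {x : ℝ} (hx : ∀ k : ℕ, x ≠ -k) (n : ℕ) :
    Gamma (x + n) = (ascPochhammer ℝ n).eval x * Gamma x := by
  induction n with
  | zero => simp
  | succ n ih =>
    have hxn : x + n ≠ 0 := fun h => hx n (by linarith)
    rw [Nat.cast_succ, ← add_assoc, Gamma_add_one hxn, ih, ascPochhammer_succ_eval]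
    ring

theorem Real.Gamma_add_nat_add_one {t : ℝ} (ht : -1 < t) (m : ℕ) :
    Gamma (t + m + 1) = (-1) ^ m * (descPochhammer ℝ m).eval (-(t + 1)) * Gamma (t + 1) := by
  have hx : ∀ k : ℕ, t + 1 ≠ -k := fun k h => by
    have := k.cast_nonneg (α := ℝ); linarith
  rw [← ascPochhammer_eval_neg_eq_descPochhammer, neg_neg, ← Gamma_add_nat hx]
  ring_nf

theorem Real.Gamma_div_Gamma_eq_descPochhammer {α : ℝ} (hα : -1 < α) {m i : ℕ}
    (hmi : m ≤ i) :
    Gamma (i + α + 1) / Gamma (m + α + 1) = (descPochhammer ℝ (i - m)).eval (α + i) := by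
  have hx : ∀ k : ℕ, m + α + 1 ≠ -k := fun k h => by
    have := m.cast_nonneg (α := ℝ); have := k.cast_nonneg (α := ℝ); linarith
  have hi : (i : ℝ) + α + 1 = m + α + 1 + (i - m : ℕ) := by push_cast [hmi]; ring
  rw [descPochhammer_eval_eq_ascPochhammer, hi, Gamma_add_nat hx,
    mul_div_cancel_right₀ _ (Gamma_ne_zero hx)]
  push_cast [hmi]
  ring_nf

noncomputable def laguerreCoeff (i : ℕ) (α : ℝ) (k : ℕ) : ℝ :=
  (i.choose k : ℝ) * (-1 : ℝ) ^ (i - k) *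
    (Gamma ((i : ℝ) + α + 1) / Gamma ((k : ℝ) + α + 1))

theorem sum_laguerreCoeff_mul_Gamma {α t : ℝ} (hα : -1 < α) (ht : -1 < t) (i : ℕ) :
    ∑ m ∈ range (i + 1), laguerreCoeff i α m * Gamma (t + m + 1) =
      (descPochhammer ℝ i).eval (t - α) * Gamma (t + 1) := by
  have hterm : ∀ m ∈ range (i + 1), laguerreCoeff i α m * Gamma (t + m + 1) =
      (-1) ^ i * Gamma (t + 1) * (i.choose m * ((descPochhammer ℝ m).eval (-(t + 1)) *
        (descPochhammer ℝ (i - m)).eval (α + i))) := by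
    intro m hm
    have hmi : m ≤ i := Nat.lt_succ_iff.mp (mem_range.mp hm)
    rw [laguerreCoeff, Gamma_div_Gamma_eq_descPochhammer hα hmi, Gamma_add_nat_add_one ht,
      show (-1 : ℝ) ^ i = (-1) ^ (i - m) * (-1) ^ m by rw [← pow_add, Nat.sub_add_cancel hmi]]
    ring
  rw [sum_congr rfl hterm, ← mul_sum, ← descPochhammer_eval_add, mul_right_comm,
    ← ascPochhammer_eval_neg_eq_descPochhammer, descPochhammer_eval_eq_ascPochhammer]
  ring_nf

theorem laguerreL_sq (i : ℕ) (α q : ℝ) :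
    laguerreL i α q ^ 2 = ∑ p ∈ range (i + 1) ×ˢ range (i + 1),
      laguerreCoeff i α p.1 * laguerreCoeff i α p.2 * q ^ (p.1 + p.2) := by
  rw [sq, laguerreL, sum_mul_sum, sum_product]
  exact sum_congr rfl fun k _ => sum_congr rfl fun m _ => by unfold laguerreCoeff; ring

theorem integral_rpow_mul_exp_neg_mul_sum {ι : Type*} (s : Finset ι) {a : ℝ} (ha : -1 < a)
    (c : ι → ℝ) (n : ι → ℕ) :
    ∫ q in Set.Ioi 0, q ^ a * exp (-q) * ∑ j ∈ s, c j * q ^ n j =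
      ∑ j ∈ s, c j * Gamma (a + n j + 1) := by
  have hpos : ∀ j, 0 < a + n j + 1 := fun j => by have := (n j).cast_nonneg (α := ℝ); linarith
  have hterm : Set.EqOn (fun q => q ^ a * exp (-q) * ∑ j ∈ s, c j * q ^ n j)
      (fun q => ∑ j ∈ s, c j * (exp (-q) * q ^ (a + n j + 1 - 1))) (Set.Ioi 0) := by
    intro q (hq : 0 < q)
    simp only [mul_sum, add_sub_cancel_right, rpow_add hq, rpow_natCast]
    exact sum_congr rfl fun j _ => by ring
  rw [setIntegral_congr_fun measurableSet_Ioi hterm,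
    integral_finsetSum _ fun j _ => (GammaIntegral_convergent (hpos j)).const_mul _]
  exact sum_congr rfl fun j _ => by rw [integral_const_mul, Gamma_eq_integral (hpos j)]

/-- The moment-perturbed diagonal Laguerre integral: for real `α > −1`, real `r > 0` and
integer `i ≥ 0`,
`∫₀^∞ q^{α+r} e^{−q} (L_i^α(q))² dq
  = ∑_{k=0}^i C(i,k)(−1)^{i−k}(Γ(i+α+1)/Γ(k+α+1))·(∏_{j=1}^i (r+k+1−j))·Γ(α+r+k+1)`. -/
theorem laguerre_diagonal_moment_integral (α : ℝ) (hα : -1 < α) (r : ℝ) (hr : 0 < r)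
    (i : ℕ) :
    (∫ q in Set.Ioi (0 : ℝ), q ^ (α + r) * Real.exp (-q) * (laguerreL i α q) ^ 2) =
      ∑ k ∈ Finset.range (i + 1),
        (i.choose k : ℝ) * (-1 : ℝ) ^ (i - k) *
          (Real.Gamma ((i : ℝ) + α + 1) / Real.Gamma ((k : ℝ) + α + 1)) *
          (∏ j ∈ Finset.range i, (r + (k : ℝ) + 1 - ((j : ℝ) + 1))) *
          Real.Gamma (α + r + (k : ℝ) + 1) := by
  simp_rw [laguerreL_sq]
  rw [integral_rpow_mul_exp_neg_mul_sum _ (by linarith), sum_product]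
  refine sum_congr rfl fun k _ => ?_
  have ht : -1 < α + r + k := by have := k.cast_nonneg (α := ℝ); linarith
  have hprod : (descPochhammer ℝ i).eval (α + r + k - α) =
      ∏ j ∈ range i, (r + (k : ℝ) + 1 - ((j : ℝ) + 1)) := by
    rw [descPochhammer_eval_eq_prod_range]
    exact prod_congr rfl fun j _ => by ring
  calc _ = laguerreCoeff i α k *
        ∑ m ∈ range (i + 1), laguerreCoeff i α m * Gamma (α + r + k + m + 1) := by
        rw [mul_sum]; push_cast; simp_rw [add_assoc, mul_assoc]
    _ = laguerreCoeff i α k *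
        ((descPochhammer ℝ i).eval (α + r + k - α) * Gamma (α + r + k + 1)) := by
        rw [sum_laguerreCoeff_mul_Gamma hα ht]
    _ = _ := by
        rw [hprod, laguerreCoeff]
        ring
end

section
/- For every integer a ≥ 0 and every real number r ≠ 0, ∑_{i=0}^{a} (−1)^i / (Γ(i+1)·Γ(r−i+1)) = (−1)^a / (r·Γ(a+1)·Γ(r−a)), with the convention that 1/Γ(x) = 0 when x is a nonpositive integer. -/
/-! The partial sums telescope: adding the `(a+1)`-st term to the closed form at `a` is, after
scaling by `(-1)^a / r`, Pascal's rule for the generalized binomial coefficients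
`1 / (Γ(u+1) Γ(v+1))` at `u = a + 1`, `u + v = r`. That rule holds for all real `u`, `v`, since
`1/Γ(x) = x / Γ(x+1)` holds everywhere, poles included (where `Γ` vanishes in Mathlib). -/

open Real Finset

theorem Real.inv_Gamma_eq_mul_inv_Gamma_add_one (x : ℝ) :
    (Gamma x)⁻¹ = x * (Gamma (x + 1))⁻¹ := by
  rcases eq_or_ne x 0 with rfl | hx
  · simp [Gamma_zero]
  · rw [Gamma_add_one hx, mul_inv, ← mul_assoc, mul_inv_cancel₀ hx, one_mul]

theorem Real.inv_Gamma_mul_add_inv_Gamma_mul (u v : ℝ) :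
    (Gamma u * Gamma (v + 1))⁻¹ + (Gamma (u + 1) * Gamma v)⁻¹ =
      (u + v) * (Gamma (u + 1) * Gamma (v + 1))⁻¹ := by
  rw [mul_inv, mul_inv, inv_Gamma_eq_mul_inv_Gamma_add_one u,
    inv_Gamma_eq_mul_inv_Gamma_add_one v, mul_inv]
  ring

/-- Appendix 2 gamma-function summation identity: for integer `a ≥ 0` and real `r ≠ 0`,
`∑_{i=0}^{a} (−1)^i / (Γ(i+1)·Γ(r−i+1)) = (−1)^a / (r·Γ(a+1)·Γ(r−a))`.
(Mathlib's `Real.Gamma` vanishes at nonpositive integers, so `1/Γ(x) = 0` there.) -/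
theorem lubkin_gamma_sum_identity (a : ℕ) (r : ℝ) (hr : r ≠ 0) :
    ∑ i ∈ Finset.range (a + 1),
        (-1 : ℝ) ^ i / (Real.Gamma ((i : ℝ) + 1) * Real.Gamma (r - (i : ℝ) + 1)) =
      (-1 : ℝ) ^ a / (r * Real.Gamma ((a : ℝ) + 1) * Real.Gamma (r - (a : ℝ))) := by
  induction a with
  | zero => simp [Gamma_add_one hr]
  | succ a ih =>
    have pascal := inv_Gamma_mul_add_inv_Gamma_mul ((a : ℝ) + 1) (r - (a + 1))
    rw [sum_range_succ, ih]
    push_cast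
    rw [show r - ((a : ℝ) + 1) + 1 = r - a by ring] at pascal ⊢
    linear_combination (-1) ^ a * r⁻¹ * pascal +
      (-1) ^ a * (Gamma ((a : ℝ) + 1 + 1) * Gamma (r - a))⁻¹ * mul_inv_cancel₀ hr
end

section
/- For all integers m ≥ 1, n ≥ 1 and r ≥ 1, (1/r)·∑_{k=0}^{m−1} (−1)^k Γ(m+r−k)Γ(n+r−k)/(k!·Γ(r−k)·Γ(m−k)·Γ(n−k)) = r!·∑_{k=0}^{m−1} C(r−1,k)·C(m,k+1)·C(n+r−k−1,n−1), with the convention that 1/Γ(x) = 0 when x is a nonpositive integer (so on the left only the terms with k ≤ r−1 contribute). -/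
/-!
Write `r = a + 1`. The Gamma quotients are factorials, so the `k`-th summand on the left is
`r · r! · (-1)^k C(a,k) C(m+a-k, a+1) C(n+a-k, a+1)`; where a Gamma argument is a nonpositive
integer, Mathlib's values `Γ = 0` and `x / 0 = 0` match the vanishing binomials. Vandermonde's identity and
trinomial revision expand `C(a,k) C(m+a-k, a+1)` as `∑_j C(a,j) C(j,k) C(m,j+1)`; after swapping
the sums, the sum over `k` is the `j`-th finite difference of `x ↦ C(x, a+1)`, namely
`C(n+a-j, a+1-j) = C(n+a-j, n-1)`.
-/

open Finset Nat

theorem choose_mul_choose_sub_sub_eq {a j : ℕ} (k : ℕ) (hj : j ≤ a) :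
    a.choose k * (a - k).choose (a - j) = a.choose j * j.choose k := by
  rcases le_or_gt k j with hkj | hjk
  · rw [choose_mul hkj, choose_symm_of_eq_add (by omega : a - k = (j - k) + (a - j))]
  · rw [choose_eq_zero_of_lt hjk, mul_zero]
    rcases le_or_gt k a with hka | hak
    · rw [choose_eq_zero_of_lt (by omega : a - k < a - j), mul_zero]
    · rw [choose_eq_zero_of_lt hak, zero_mul]

theorem choose_mul_choose_add_sub_eq_sum (a m k : ℕ) :
    a.choose k * (m + a - k).choose (a + 1) =
      ∑ j ∈ range (a + 1), a.choose j * j.choose k * m.choose (j + 1) := by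
  rcases le_or_gt k a with hka | hak
  · have vandermonde : (m + a - k).choose (a + 1) =
        ∑ j ∈ range (a + 1), m.choose (j + 1) * (a - k).choose (a - j) := by
      rw [Nat.add_sub_assoc hka, add_choose_eq, Finset.Nat.sum_antidiagonal_succ,
        Finset.Nat.sum_antidiagonal_eq_sum_range_succ_mk]
      simp only [choose_zero_right, choose_eq_zero_of_lt (by omega : a - k < a + 1), mul_zero,
        zero_add]
    rw [vandermonde, mul_sum]
    refine sum_congr rfl fun j hj => ?_
    rw [mul_left_comm, choose_mul_choose_sub_sub_eq k (Nat.lt_succ_iff.mp (mem_range.mp hj))]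
    ring
  · rw [choose_eq_zero_of_lt hak, zero_mul, eq_comm]
    refine sum_eq_zero fun j hj => ?_
    rw [choose_eq_zero_of_lt (by simp at hj; omega : j < k), mul_zero, zero_mul]

theorem sum_range_neg_one_pow_mul_choose_mul_choose (k j y : ℕ) :
    ∑ i ∈ range (k + 1), (-1 : ℤ) ^ i * k.choose i * (y + k - i).choose (k + j) = y.choose j := by
  have newton := fwdDiff_iter_eq_sum_shift 1 (fun x ↦ (x.choose (k + j) : ℤ)) k y
  rw [fwdDiff_iter_choose] at newton
  rw [← sum_range_reflect]
  refine (sum_congr rfl fun i hi => ?_).trans newton.symm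
  have hik : i ≤ k := Nat.lt_succ_iff.mp (mem_range.mp hi)
  rw [add_tsub_cancel_right, choose_symm hik, show y + k - (k - i) = y + i by omega, smul_eq_mul,
    smul_eq_mul, mul_one]

theorem Finset.sum_range_eq_sum_range_of_eq_zero {M : Type*} [AddCommMonoid M] {f : ℕ → M}
    {p q : ℕ} (hp : ∀ k ≥ p, f k = 0) (hq : ∀ k ≥ q, f k = 0) :
    ∑ k ∈ range p, f k = ∑ k ∈ range q, f k := by
  rcases le_total p q with hpq | hqp
  · exact (eventually_constant_sum hp hpq).symm
  · exact eventually_constant_sum hq hqp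

theorem sum_range_neg_one_pow_mul_choose_mul_choose_mul_choose (a m n : ℕ) :
    ∑ k ∈ range m,
        (-1 : ℤ) ^ k * a.choose k * (m + a - k).choose (a + 1) * (n + a - k).choose (a + 1) =
      ∑ k ∈ range m, (a.choose k * m.choose (k + 1) * (n + a - k).choose (a + 1 - k) : ℤ) := by
  suffices ∑ k ∈ range (a + 1),
        (-1 : ℤ) ^ k * a.choose k * (m + a - k).choose (a + 1) * (n + a - k).choose (a + 1) =
      ∑ k ∈ range (a + 1), (a.choose k * m.choose (k + 1) * (n + a - k).choose (a + 1 - k) : ℤ) by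
    rwa [sum_range_eq_sum_range_of_eq_zero (p := m) (q := a + 1)
        (fun k hk => by simp [choose_eq_zero_of_lt (show m + a - k < a + 1 by omega)])
        (fun k hk => by simp [choose_eq_zero_of_lt (show a < k by omega)]),
      sum_range_eq_sum_range_of_eq_zero (p := m) (q := a + 1)
        (fun k hk => by simp [choose_eq_zero_of_lt (show m < k + 1 by omega)])
        (fun k hk => by simp [choose_eq_zero_of_lt (show a < k by omega)])]
  calc _ = ∑ k ∈ range (a + 1), ∑ j ∈ range (a + 1),
          (-1 : ℤ) ^ k * (a.choose j * j.choose k * m.choose (j + 1) : ℕ) *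
            (n + a - k).choose (a + 1) := by
        refine sum_congr rfl fun k _ => ?_
        rw [mul_assoc _ (a.choose k : ℤ), ← Nat.cast_mul, choose_mul_choose_add_sub_eq_sum,
          Nat.cast_sum, mul_sum, sum_mul]
    _ = ∑ j ∈ range (a + 1), (a.choose j * m.choose (j + 1) : ℤ) *
          ∑ k ∈ range (a + 1), (-1 : ℤ) ^ k * j.choose k * (n + a - k).choose (a + 1) := by
        rw [sum_comm]
        refine sum_congr rfl fun j _ => ?_
        rw [mul_sum]
        refine sum_congr rfl fun k _ => ?_
        push_cast
        ring
    _ = _ := by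
        refine sum_congr rfl fun j hj => ?_
        have hja : j ≤ a := Nat.lt_succ_iff.mp (mem_range.mp hj)
        have newton := sum_range_neg_one_pow_mul_choose_mul_choose j (a + 1 - j) (n + a - j)
        rw [show n + a - j + j = n + a by omega, show j + (a + 1 - j) = a + 1 by omega] at newton
        rw [eventually_constant_sum (N := j + 1) _ (by omega), newton]
        intro k hk
        rw [choose_eq_zero_of_lt hk]
        push_cast
        ring

theorem Real.Gamma_natCast_sub_natCast (p q : ℕ) :
    Gamma ((p : ℝ) - q) = if q < p then ((p - q - 1)! : ℝ) else 0 := by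
  split_ifs with h
  · obtain ⟨i, rfl⟩ := Nat.exists_eq_add_of_lt h
    rw [show ((q + i + 1 : ℕ) : ℝ) - q = i + 1 by push_cast; ring, Gamma_nat_eq_factorial,
      show q + i + 1 - q - 1 = i by omega]
  · obtain ⟨i, rfl⟩ := Nat.exists_eq_add_of_le (not_lt.mp h)
    rw [show (p : ℝ) - ((p + i : ℕ) : ℝ) = -i by push_cast; ring, Gamma_neg_nat_eq_zero]

theorem Real.Gamma_natCast_add_sub_div_Gamma_natCast_sub (p a k : ℕ) :
    Gamma ((p : ℝ) + ((a + 1 : ℕ) : ℝ) - k) / Gamma ((p : ℝ) - k) =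
      ((a + 1)! : ℝ) * (p + a - k).choose (a + 1) := by
  rw [← Nat.cast_add, Gamma_natCast_sub_natCast, Gamma_natCast_sub_natCast]
  rcases lt_or_ge k p with hkp | hpk
  · obtain ⟨i, rfl⟩ := Nat.exists_eq_add_of_lt hkp
    rw [if_pos (by omega), if_pos hkp, show k + i + 1 + (a + 1) - k - 1 = i + (a + 1) by omega,
      show k + i + 1 - k - 1 = i by omega, show k + i + 1 + a - k = i + (a + 1) by omega,
      ← add_choose_mul_factorial_mul_factorial]
    push_cast
    field_simp
  · rw [if_neg (not_lt.mpr hpk), div_zero, choose_eq_zero_of_lt (by omega), Nat.cast_zero, mul_zero]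

theorem Real.inv_factorial_mul_Gamma_natCast_sub (a k : ℕ) :
    ((k ! : ℝ) * Gamma (((a + 1 : ℕ) : ℝ) - k))⁻¹ = a.choose k / a ! := by
  rw [Gamma_natCast_sub_natCast]
  split_ifs with h
  · rw [cast_choose ℝ (by omega : k ≤ a), show a + 1 - k - 1 = a - k by omega]
    field_simp
  · rw [mul_zero, inv_zero, choose_eq_zero_of_lt (by omega), Nat.cast_zero, zero_div]

theorem neg_one_pow_mul_Gamma_mul_Gamma_div_eq (m n a k : ℕ) :
    (-1 : ℝ) ^ k * Real.Gamma ((m : ℝ) + ((a + 1 : ℕ) : ℝ) - k) *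
        Real.Gamma ((n : ℝ) + ((a + 1 : ℕ) : ℝ) - k) /
        ((k ! : ℝ) * Real.Gamma (((a + 1 : ℕ) : ℝ) - k) *
          Real.Gamma ((m : ℝ) - k) * Real.Gamma ((n : ℝ) - k)) =
      ((a + 1 : ℕ) * (a + 1)! : ℝ) * ((-1 : ℤ) ^ k * a.choose k * (m + a - k).choose (a + 1) *
        (n + a - k).choose (a + 1) : ℤ) := by
  rw [show ∀ s t u v w x y : ℝ, s * t * u / (v * w * x * y) = s * (t / x) * (u / y) * (v * w)⁻¹
      by intros; ring, Real.Gamma_natCast_add_sub_div_Gamma_natCast_sub,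
    Real.Gamma_natCast_add_sub_div_Gamma_natCast_sub, Real.inv_factorial_mul_Gamma_natCast_sub,
    factorial_succ]
  push_cast
  field_simp

theorem mean_trace_gamma_eq_binomial_general (m n r : ℕ) (hn : 1 ≤ n) (hr : 1 ≤ r) :
    (1 / (r : ℝ)) *
        ∑ k ∈ Finset.range m,
          (-1 : ℝ) ^ k * Real.Gamma ((m : ℝ) + (r : ℝ) - (k : ℝ)) *
            Real.Gamma ((n : ℝ) + (r : ℝ) - (k : ℝ)) /
            ((k.factorial : ℝ) * Real.Gamma ((r : ℝ) - (k : ℝ)) *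
              Real.Gamma ((m : ℝ) - (k : ℝ)) * Real.Gamma ((n : ℝ) - (k : ℝ))) =
      (r.factorial : ℝ) *
        ∑ k ∈ Finset.range m,
          ((r - 1).choose k : ℝ) * (m.choose (k + 1) : ℝ) *
            ((n + r - k - 1).choose (n - 1) : ℝ) := by
  obtain ⟨a, rfl⟩ := Nat.exists_eq_add_of_le' hr
  have rhs_summand (k : ℕ) :
      ((a + 1 - 1).choose k : ℝ) * m.choose (k + 1) * (n + (a + 1) - k - 1).choose (n - 1) =
        (a.choose k * m.choose (k + 1) * (n + a - k).choose (a + 1 - k) : ℤ) := by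
    rw [add_tsub_cancel_right]
    rcases le_or_gt k a with hka | hak
    · rw [choose_symm_of_eq_add (show n + (a + 1) - k - 1 = (n - 1) + (a + 1 - k) by omega),
        show n + (a + 1) - k - 1 = n + a - k by omega]
      push_cast
      ring
    · simp [choose_eq_zero_of_lt hak]
  simp_rw [neg_one_pow_mul_Gamma_mul_Gamma_div_eq, rhs_summand, ← mul_sum, ← Int.cast_sum,
    sum_range_neg_one_pow_mul_choose_mul_choose_mul_choose]
  field_simp

/-- Corollary to Theorem 1: for integers `m, n, r ≥ 1`,
`(1/r)·∑_{k=0}^{m−1} (−1)^k Γ(m+r−k)Γ(n+r−k)/(k!·Γ(r−k)·Γ(m−k)·Γ(n−k))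
  = r!·∑_{k=0}^{m−1} C(r−1,k)·C(m,k+1)·C(n+r−k−1,n−1)`.
(Mathlib's `Real.Gamma` vanishes at nonpositive integers, so `1/Γ(r−k) = 0` for
`k ≥ r`, and only terms with `k ≤ r−1` contribute on the left.) -/
theorem mean_trace_gamma_eq_binomial (m n r : ℕ) (hm : 1 ≤ m) (hn : 1 ≤ n) (hr : 1 ≤ r) :
    (1 / (r : ℝ)) *
        ∑ k ∈ Finset.range m,
          (-1 : ℝ) ^ k * Real.Gamma ((m : ℝ) + (r : ℝ) - (k : ℝ)) *
            Real.Gamma ((n : ℝ) + (r : ℝ) - (k : ℝ)) /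
            ((k.factorial : ℝ) * Real.Gamma ((r : ℝ) - (k : ℝ)) *
              Real.Gamma ((m : ℝ) - (k : ℝ)) * Real.Gamma ((n : ℝ) - (k : ℝ))) =
      (r.factorial : ℝ) *
        ∑ k ∈ Finset.range m,
          ((r - 1).choose k : ℝ) * (m.choose (k + 1) : ℝ) *
            ((n + r - k - 1).choose (n - 1) : ℝ) :=
  mean_trace_gamma_eq_binomial_general m n r hn hr
end

section
/- For every integer r ≥ 0, ∑_{k=0}^{r} C(r,k)·(−1)^{r−k}·2^{k−r} · (6·k!/(k+3)!)·(k^2+k+2) = 3·(1+(−1)^r) / (2^r·(r+3)). -/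
/-!
Since `C(r,k) k! / (k+3)! = C(r+3,k+3) r! / (r+3)!`, the substitution `j = k + 3` turns the sum
into `Σ_j C(r+3,j) (-2)^j (j² - 5j + 8)` with its terms `j = 0, 1, 2` removed. Writing
`j² - 5j + 8 = 2 C(j,2) - 4 C(j,1) + 8` and using `Σ_j C(n,j) C(j,m) x^j = C(n,m) x^m (1+x)^(n-m)`
at `x = -2`, where `1 + x = -1`, the full binomial sum over `j ≤ n = r + 3` is
`4 (-1)^n (n-1)(n-2)`.
-/

open Finset Nat

theorem Nat.choose_mul_factorial_mul_factorial_add (r k m : ℕ) :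
    r.choose k * k ! * (r + m)! = (r + m).choose (k + m) * (k + m)! * r ! := by
  rcases le_or_gt k r with hk | hk
  · have hkm : k + m ≤ r + m := Nat.add_le_add_right hk m
    apply Nat.eq_of_mul_eq_mul_right (factorial_pos (r - k))
    calc r.choose k * k ! * (r + m)! * (r - k)! = r.choose k * k ! * (r - k)! * (r + m)! := by ring
      _ = (r + m).choose (k + m) * (k + m)! * (r + m - (k + m))! * r ! := by
        rw [choose_mul_factorial_mul_factorial hk, choose_mul_factorial_mul_factorial hkm, mul_comm]
      _ = _ := by rw [Nat.add_sub_add_right]; ring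
  · rw [choose_eq_zero_of_lt hk, choose_eq_zero_of_lt (Nat.add_lt_add_right hk m)]
    simp

theorem sum_range_choose_mul_choose_mul_pow {R : Type*} [CommSemiring R] (x : R) (n m : ℕ) :
    ∑ j ∈ range (n + 1), (n.choose j * j.choose m : R) * x ^ j =
      n.choose m * x ^ m * (1 + x) ^ (n - m) := by
  rcases le_or_gt m n with hmn | hmn
  · obtain ⟨l, rfl⟩ := Nat.exists_eq_add_of_le hmn
    have hlow : ∑ j ∈ range m, ((m + l).choose j * j.choose m : R) * x ^ j = 0 :=
      sum_eq_zero fun j hj => by simp [choose_eq_zero_of_lt (mem_range.mp hj)]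
    rw [show m + l + 1 = m + (l + 1) by ring, sum_range_add, hlow, zero_add,
      Nat.add_sub_cancel_left, add_comm 1 x, add_pow, mul_sum]
    refine sum_congr rfl fun i _ => ?_
    rw [← Nat.cast_mul, choose_mul (Nat.le_add_right m i), Nat.add_sub_cancel_left,
      Nat.add_sub_cancel_left]
    push_cast
    ring
  · rw [choose_eq_zero_of_lt hmn, Nat.cast_zero, zero_mul, zero_mul]
    exact sum_eq_zero fun j hj => by
      simp [choose_eq_zero_of_lt ((mem_range.mp hj).trans_le hmn)]

theorem sum_range_choose_mul_neg_two_pow_mul (n : ℕ) :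
    ∑ j ∈ range (n + 1), (n.choose j : ℝ) * (-2) ^ j * ((j : ℝ) ^ 2 - 5 * j + 8) =
      4 * (-1 : ℝ) ^ n * (n - 1) * (n - 2) := by
  have hsplit : ∀ j : ℕ, (n.choose j : ℝ) * (-2) ^ j * ((j : ℝ) ^ 2 - 5 * j + 8) =
      2 * ((n.choose j * j.choose 2 : ℝ) * (-2) ^ j) -
        4 * ((n.choose j * j.choose 1 : ℝ) * (-2) ^ j) +
        8 * ((n.choose j * j.choose 0 : ℝ) * (-2) ^ j) := fun j => by
    simp only [cast_choose_two, choose_one_right, choose_zero_right, cast_one]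
    ring
  simp only [hsplit, sum_add_distrib, sum_sub_distrib, ← mul_sum,
    sum_range_choose_mul_choose_mul_pow]
  rcases n with _ | _ | n
  · norm_num
  · norm_num
  · rw [show n + 1 + 1 - 2 = n by omega]
    norm_num [cast_choose_two]
    ring

theorem summand_eq_mul_choose_add_three (r k : ℕ) (hk : k ≤ r) :
    (r.choose k : ℝ) * (-1) ^ (r - k) * (2 ^ k / 2 ^ r) * (6 * k ! / (k + 3)!) *
        ((k : ℝ) ^ 2 + k + 2) =
      -3 * (-1) ^ r * r ! / (4 * 2 ^ r * (r + 3)!) *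
        (((r + 3).choose (k + 3) : ℝ) * (-2) ^ (k + 3) *
          (((k + 3 : ℕ) : ℝ) ^ 2 - 5 * (k + 3 : ℕ) + 8)) := by
  have hfac : (r.choose k * k ! * (r + 3)! : ℝ) = (r + 3).choose (k + 3) * (k + 3)! * r ! := by
    exact_mod_cast choose_mul_factorial_mul_factorial_add r k 3
  have hsign : (-1 : ℝ) ^ (r - k) * (-1) ^ k = (-1) ^ r := by
    rw [← pow_add, Nat.sub_add_cancel hk]
  have hsq : (-1 : ℝ) ^ k * (-1) ^ k = 1 := pow_mul_pow_eq_one k (by norm_num)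
  have hneg : (-2 : ℝ) ^ (k + 3) = -8 * (-1) ^ k * 2 ^ k := by
    rw [pow_add, neg_pow]
    ring
  rw [hneg, ← hsign]
  field_simp
  push_cast
  linear_combination
    24 * ((k : ℝ) ^ 2 + k + 2) * (hfac - ((r + 3).choose (k + 3) * (k + 3)! * r ! : ℝ) * hsq)

/-- Section 3 closed form for the case `m = n = 2`: for every integer `r ≥ 0`,
`∑_{k=0}^{r} C(r,k)·(−1)^{r−k}·2^{k−r}·(6·k!/(k+3)!)·(k²+k+2) = 3·(1+(−1)^r)/(2^r·(r+3))`. -/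
theorem lubkin_two_two_trace (r : ℕ) :
    ∑ k ∈ Finset.range (r + 1),
        (r.choose k : ℝ) * (-1 : ℝ) ^ (r - k) * ((2 : ℝ) ^ k / (2 : ℝ) ^ r) *
          (6 * (k.factorial : ℝ) / ((k + 3).factorial : ℝ)) * ((k : ℝ) ^ 2 + (k : ℝ) + 2) =
      3 * (1 + (-1 : ℝ) ^ r) / ((2 : ℝ) ^ r * ((r : ℝ) + 3)) := by
  set f : ℕ → ℝ := fun j => ((r + 3).choose j : ℝ) * (-2) ^ j * ((j : ℝ) ^ 2 - 5 * j + 8)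
  have hshift :
      ∑ k ∈ range (r + 1), f (k + 3) =
        ∑ j ∈ range (r + 3 + 1), f j - ∑ j ∈ range 3, f j := by
    rw [show r + 3 + 1 = 3 + (r + 1) by ring, sum_range_add f 3 (r + 1)]
    simp only [add_comm 3, add_sub_cancel_left]
  have hlow : ∑ j ∈ range 3, f j = 4 * (r + 1) * (r + 2) := by
    simp only [f, sum_range_succ, sum_range_zero, choose_zero_right, choose_one_right,
      cast_choose_two]
    push_cast
    ring
  have hfac : ((r + 3)! : ℝ) = (r + 1) * (r + 2) * (r + 3) * r ! := by
    push_cast [factorial_succ]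
    ring
  calc _ = -3 * (-1) ^ r * r ! / (4 * 2 ^ r * (r + 3)!) * ∑ k ∈ range (r + 1), f (k + 3) := by
        rw [mul_sum]
        exact sum_congr rfl fun k hk =>
          summand_eq_mul_choose_add_three r k (mem_range_succ_iff.mp hk)
    _ = _ := by
      rw [hshift, hlow, sum_range_choose_mul_neg_two_pow_mul, hfac]
      field_simp
      push_cast
      have hsq : (-1 : ℝ) ^ r * (-1) ^ r = 1 := pow_mul_pow_eq_one r (by norm_num)
      linear_combination ((r : ℝ) + 1) * (r + 2) * hsq
end

section
/- The series ∑_{r=1}^∞ 3·(1−(−1)^r) / (2·r·(r+1)·(r+4)) converges, and its sum equals ln 2 − 1/3. -/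
/-!
Since `1 - (-1)^(r+1) = 1 + (-1)^r` and
`1 / ((r+1)(r+2)(r+5)) = (1/4)/(r+1) - (1/3)/(r+2) + (1/12)/(r+5)`, the series splits into
telescoping sums `∑ (1/(r+1) - 1/(r+k+1)) = H_k` and tails of the alternating harmonic series
`∑ (-1)^r/(r+1) = log 2`; the latter value comes from Abel's limit theorem applied to the power
series of `log (1 + x) / x`. The pieces converge only conditionally, so they are combined on
partial sums, and nonnegativity of the terms turns convergence of the partial sums into `HasSum`.
-/

open Filter Finset Real Topology

section TopologicalAddGroup

variable {M : Type*} [AddCommGroup M] [TopologicalSpace M] [IsTopologicalAddGroup M]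

theorem Filter.Tendsto.sum_range_comp_add {g : ℕ → M} {L : M}
    (hg : Tendsto (fun N ↦ ∑ i ∈ range N, g i) atTop (𝓝 L)) (k : ℕ) :
    Tendsto (fun N ↦ ∑ i ∈ range N, g (i + k)) atTop (𝓝 (L - ∑ i ∈ range k, g i)) := by
  refine ((hg.comp (tendsto_add_atTop_nat k)).sub_const _).congr fun N ↦ ?_
  rw [Function.comp_apply, add_comm N k, sum_range_add, add_sub_cancel_left]
  simp only [add_comm k]

theorem tendsto_sum_range_sub_comp_add {h : ℕ → M} (hh : Tendsto h atTop (𝓝 0)) (k : ℕ) :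
    Tendsto (fun N ↦ ∑ i ∈ range N, (h i - h (i + k))) atTop (𝓝 (∑ i ∈ range k, h i)) := by
  have tail : Tendsto (fun N ↦ ∑ i ∈ range k, h (N + i)) atTop (𝓝 0) := by
    simpa using tendsto_finsetSum (range k) fun i _ ↦ hh.comp (tendsto_add_atTop_nat i)
  rw [← sub_zero (∑ i ∈ range k, h i)]
  refine (tendsto_const_nhds.sub tail).congr fun N ↦ ?_
  rw [sum_sub_distrib, sub_eq_sub_iff_add_eq_add, ← sum_range_add, add_comm N k, sum_range_add]
  simp only [add_comm k]

end TopologicalAddGroup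

theorem tendsto_sum_range_one_div_sub_one_div (k : ℕ) :
    Tendsto (fun N ↦ ∑ i ∈ range N, (1 / ((i : ℝ) + 1) - 1 / ((i : ℝ) + k + 1))) atTop
      (𝓝 (harmonic k)) := by
  have := tendsto_sum_range_sub_comp_add (tendsto_one_div_add_atTop_nhds_zero_nat (𝕜 := ℝ)) k
  push_cast [harmonic, inv_eq_one_div] at this ⊢
  exact this

theorem Real.tendsto_sum_range_neg_one_pow_div_succ :
    Tendsto (fun N ↦ ∑ i ∈ range N, (-1 : ℝ) ^ i / (i + 1)) atTop (𝓝 (log 2)) := by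
  obtain ⟨l, hl⟩ := Antitone.tendsto_alternating_series_of_tendsto_zero
    (fun m n hmn ↦ by gcongr) tendsto_one_div_add_atTop_nhds_zero_nat
  have abel := tendsto_tsum_powerSeries_nhdsWithin_lt hl
  have power_series : (fun x : ℝ ↦ ∑' n : ℕ, (-1) ^ n * (1 / (n + 1)) * x ^ n)
      =ᶠ[𝓝[<] 1] fun x ↦ log (1 + x) / x := by
    filter_upwards [Ioo_mem_nhdsLT zero_lt_one] with x ⟨hx0, hx1⟩
    have hs := (hasSum_pow_div_log_of_abs_lt_one (x := -x)
      (by rwa [abs_neg, abs_of_pos hx0])).div_const (-x)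
    rw [sub_neg_eq_add, neg_div_neg_eq] at hs
    refine (hs.congr_fun fun n ↦ ?_).tsum_eq
    field_simp
    ring
  have continuity_at_one : Tendsto (fun x : ℝ ↦ log (1 + x) / x) (𝓝[<] 1) (𝓝 (log 2)) := by
    have : ContinuousAt (fun x : ℝ ↦ log (1 + x) / x) 1 :=
      ((continuousAt_log (by norm_num)).comp (by fun_prop)).div continuousAt_id one_ne_zero
    simpa [one_add_one_eq_two] using this.tendsto.mono_left nhdsWithin_le_nhds
  rw [tendsto_nhds_unique (abel.congr' power_series) continuity_at_one] at hl
  simpa only [mul_one_div] using hl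

theorem Real.tendsto_sum_range_neg_one_pow_div_add (k : ℕ) :
    Tendsto (fun N ↦ ∑ i ∈ range N, (-1 : ℝ) ^ i / ((i : ℝ) + k + 1)) atTop
      (𝓝 ((-1) ^ k * (log 2 - ∑ i ∈ range k, (-1 : ℝ) ^ i / (i + 1)))) := by
  refine ((tendsto_sum_range_neg_one_pow_div_succ.sum_range_comp_add k).const_mul _).congr
    fun N ↦ ?_
  rw [mul_sum]
  refine sum_congr rfl fun i _ ↦ ?_
  rw [pow_add, ← mul_div_assoc, mul_left_comm, ← mul_pow, neg_one_mul, neg_neg, one_pow,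
    mul_one, Nat.cast_add, add_assoc]

theorem lubkin_term_nonneg (r : ℕ) :
    0 ≤ 3 * (1 - (-1 : ℝ) ^ (r + 1)) / (2 * ((r : ℝ) + 1) * ((r : ℝ) + 2) * ((r : ℝ) + 5)) := by
  have : (0 : ℝ) ≤ 1 - (-1) ^ (r + 1) :=
    sub_nonneg.mpr ((le_abs_self _).trans_eq (abs_neg_one_pow _))
  positivity

-- The casts `((k : ℕ) : ℝ)` match the shapes of the two limit lemmas above.
theorem lubkin_term_eq_partial_fractions (r : ℕ) :
    3 * (1 - (-1 : ℝ) ^ (r + 1)) / (2 * ((r : ℝ) + 1) * ((r : ℝ) + 2) * ((r : ℝ) + 5)) =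
      1 / 2 * (1 / ((r : ℝ) + 1) - 1 / ((r : ℝ) + (1 : ℕ) + 1))
        - 1 / 8 * (1 / ((r : ℝ) + 1) - 1 / ((r : ℝ) + (4 : ℕ) + 1))
        + 3 / 8 * ((-1) ^ r / ((r : ℝ) + (0 : ℕ) + 1))
        - 1 / 2 * ((-1) ^ r / ((r : ℝ) + (1 : ℕ) + 1))
        + 1 / 8 * ((-1) ^ r / ((r : ℝ) + (4 : ℕ) + 1)) := by
  push_cast
  rw [pow_succ]
  field_simp
  ring

/-- Evaluation of Lubkin's series for `m = n = 2`:
`∑_{r=1}^∞ 3·(1−(−1)^r)/(2·r·(r+1)·(r+4))` converges, with sum `ln 2 − 1/3`. -/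
theorem lubkin_series_two_two :
    HasSum
      (fun r : ℕ =>
        3 * (1 - (-1 : ℝ) ^ (r + 1)) /
          (2 * ((r : ℝ) + 1) * ((r : ℝ) + 2) * ((r : ℝ) + 5)))
      (Real.log 2 - 1 / 3) := by
  rw [hasSum_iff_tendsto_nat_of_nonneg lubkin_term_nonneg]
  have := (((((tendsto_sum_range_one_div_sub_one_div 1).const_mul (1 / 2)).sub
    ((tendsto_sum_range_one_div_sub_one_div 4).const_mul (1 / 8))).add
    ((tendsto_sum_range_neg_one_pow_div_add 0).const_mul (3 / 8))).sub
    ((tendsto_sum_range_neg_one_pow_div_add 1).const_mul (1 / 2))).add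
    ((tendsto_sum_range_neg_one_pow_div_add 4).const_mul (1 / 8))
  convert this using 1
  · ext N
    simp only [mul_sum, ← sum_sub_distrib, ← sum_add_distrib, lubkin_term_eq_partial_fractions]
  · norm_num [harmonic, sum_range_succ]
    ring
end

section
/- For all integers m ≥ 3 and n ≥ 1, Lubkin's series diverges absolutely: ∑_{r=1}^∞ (m^r/(r(r+1))) · |∑_{k=0}^{r+1} C(r+1,k)·(−1)^{r+1−k}·m^{k−r−1}·c_k| = +∞; in particular the series ∑_{r=1}^∞ ((−1)^r m^r/(r(r+1))) · ∑_{k=0}^{r+1} C(r+1,k)·(−1)^{r+1−k}·m^{k−r−1}·c_k does not converge. -/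
/-!
Write `c i = L (X ^ i)` for a linear functional `L` on polynomials, so that the inner sums of
the series are the moments `A j = L ((X - 1/m) ^ j)` about `1/m`; expanding
`X ^ k = ((X - 1/m) + 1/m) ^ k` recovers `c` from `A`. If the terms
`m ^ (r+1) |A (r+2)| / ((r+1)(r+2))` were bounded, then `|A j| = O(j² m⁻ʲ)` and the inversion
would give `c k = O(k² (2/m)ᵏ)`, an exponential decay for `m ≥ 3`. But
`c k ≥ (mn-1)! k! / (mn+k-1)! = 1 / C(k+mn-1, mn-1) ≥ (k+1)^-(mn-1)` decays only polynomially.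
So the terms are unbounded: the absolute series diverges and the signed one cannot converge.
-/

open Finset Polynomial Filter Topology

section
variable {R : Type*} [CommSemiring R]

def binomialShift (x : R) (c : ℕ → R) (j : ℕ) : R :=
  ∑ i ∈ range (j + 1), (j.choose i : R) * x ^ (j - i) * c i

lemma binomialShift_map_pow {A : Type*} [CommSemiring A] [Algebra R A] (L : A →ₗ[R] R) (q : A)
    (x : R) (j : ℕ) :
    binomialShift x (fun i => L (q ^ i)) j = L ((q + algebraMap R A x) ^ j) := by
  rw [add_pow, map_sum, binomialShift]
  refine sum_congr rfl fun i _ => ?_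
  rw [← map_pow, ← Algebra.commutes, ← Algebra.smul_def, ← nsmul_eq_mul',
    ← Nat.cast_smul_eq_nsmul R, smul_smul, map_smul, smul_eq_mul]

lemma binomialShift_zero (c : ℕ → R) : binomialShift 0 c = c := by
  ext j
  rw [binomialShift, sum_eq_single_of_mem j (self_mem_range_succ j)]
  · simp
  · intro i hi hij
    have : 0 < j - i := by have := mem_range.1 hi; omega
    simp [zero_pow this.ne']

lemma binomialShift_binomialShift (x y : R) (c : ℕ → R) :
    binomialShift y (binomialShift x c) = binomialShift (x + y) c := by
  set L : R[X] →ₗ[R] R := lsum fun i => LinearMap.mulRight R (c i)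
  have hL : c = fun i => L (X ^ i) := by
    ext i; simp [L, X_pow_eq_monomial, lsum_apply, sum_monomial_index]
  ext k
  have hx : binomialShift x c = fun j => L ((X + C x) ^ j) := by
    ext j; rw [hL, binomialShift_map_pow, algebraMap_eq]
  rw [hx, binomialShift_map_pow, hL, binomialShift_map_pow, algebraMap_eq, C_add, add_assoc]
end

lemma binomialShift_binomialShift_neg {R : Type*} [CommRing R] (x : R) (c : ℕ → R) :
    binomialShift x (binomialShift (-x) c) = c := by
  rw [binomialShift_binomialShift, neg_add_cancel, binomialShift_zero]

lemma sum_choose_neg_one_pow_mul_div_pow_eq_binomialShift {K : Type*} [Field K] {a : K}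
    (ha : a ≠ 0) (c : ℕ → K) (j : ℕ) :
    ∑ i ∈ range (j + 1), (j.choose i : K) * (-1) ^ (j - i) * (a ^ i / a ^ j) * c i =
      binomialShift (-a⁻¹) c j := by
  refine sum_congr rfl fun i hi => ?_
  rw [neg_pow a⁻¹, inv_pow, pow_sub₀ a ha (Nat.lt_succ_iff.1 (mem_range.1 hi))]
  field_simp

lemma abs_binomialShift_le {x : ℝ} {A b : ℕ → ℝ} (hb : Monotone b)
    (hA : ∀ j, |A j| ≤ b j * |x| ^ j) (k : ℕ) :
    |binomialShift x A k| ≤ b k * (2 * |x|) ^ k := by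
  calc |binomialShift x A k|
      ≤ ∑ j ∈ range (k + 1), (k.choose j : ℝ) * |x| ^ (k - j) * |A j| := by
        refine (abs_sum_le_sum_abs _ _).trans_eq (sum_congr rfl fun j _ => ?_)
        rw [abs_mul, abs_mul, abs_pow, Nat.abs_cast]
    _ ≤ ∑ j ∈ range (k + 1), (k.choose j : ℝ) * (b k * |x| ^ k) := by
        refine sum_le_sum fun j hj => ?_
        have hjk : j ≤ k := Nat.lt_succ_iff.1 (mem_range.1 hj)
        calc (k.choose j : ℝ) * |x| ^ (k - j) * |A j|
            ≤ (k.choose j : ℝ) * |x| ^ (k - j) * (b k * |x| ^ j) := by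
              gcongr
              exact (hA j).trans (by gcongr; exact hb hjk)
          _ = (k.choose j : ℝ) * (b k * |x| ^ k) := by
              rw [← pow_sub_mul_pow _ hjk]; ring
    _ = b k * (2 * |x|) ^ k := by
        rw [← sum_mul, ← Nat.cast_sum, Nat.sum_range_choose, mul_pow]; push_cast; ring

noncomputable def lubkinTerm (a : ℝ) (A : ℕ → ℝ) (r : ℕ) : ℝ :=
  a ^ (r + 1) / (((r : ℝ) + 1) * ((r : ℝ) + 2)) * |A (r + 2)|

lemma exists_abs_le_mul_sq_mul_inv_pow_of_bddAbove {a : ℝ} (ha : 0 < a) {A : ℕ → ℝ}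
    (h : BddAbove (Set.range (lubkinTerm a A))) :
    ∃ K, 0 ≤ K ∧ ∀ j, |A j| ≤ K * ((j : ℝ) + 1) ^ 2 * a⁻¹ ^ j := by
  obtain ⟨B, hB⟩ := h
  refine ⟨|A 0| + a * |A 1| + a * |B|, by positivity, fun j => ?_⟩
  have haA : 0 ≤ a * |A 1| := by positivity
  have haB : 0 ≤ a * |B| := by positivity
  rcases j with _ | _ | r
  · simp only [CharP.cast_eq_zero, zero_add, one_pow, mul_one, pow_zero]; linarith
  · simp only [zero_add, Nat.cast_one, pow_one]
    rw [le_mul_inv_iff₀ ha]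
    nlinarith [abs_nonneg (A 0)]
  · have hr : lubkinTerm a A r ≤ |B| := (hB ⟨r, rfl⟩).trans (le_abs_self B)
    rw [lubkinTerm, div_mul_eq_mul_div, div_le_iff₀ (by positivity)] at hr
    rw [inv_pow, ← div_eq_mul_inv, le_div_iff₀ (by positivity)]
    push_cast
    have : 0 ≤ (r : ℝ) := r.cast_nonneg
    calc |A (r + 2)| * a ^ (r + 2) = a * (a ^ (r + 1) * |A (r + 2)|) := by ring
      _ ≤ a * (|B| * (((r : ℝ) + 1) * ((r : ℝ) + 2))) := by gcongr
      _ ≤ _ := by nlinarith [abs_nonneg (A 0)]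

lemma tendsto_add_one_pow_mul_pow {r : ℝ} (hr₀ : 0 < r) (hr₁ : r < 1) (p : ℕ) :
    Tendsto (fun k : ℕ => ((k : ℝ) + 1) ^ p * r ^ k) atTop (𝓝 0) := by
  have h := ((tendsto_pow_const_mul_const_pow_of_lt_one p hr₀.le hr₁).comp
    (tendsto_add_atTop_nat 1)).const_mul r⁻¹
  rw [mul_zero] at h
  refine h.congr fun k => ?_
  simp only [Function.comp_apply, Nat.cast_add, Nat.cast_one, pow_succ]
  field_simp

lemma tendsto_sum_range_atTop_of_not_bddAbove {f : ℕ → ℝ} (hf : ∀ n, 0 ≤ f n)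
    (h : ¬ BddAbove (Set.range f)) : Tendsto (fun N => ∑ i ∈ range N, f i) atTop atTop := by
  refine tendsto_atTop_atTop_of_monotone
    (monotone_nat_of_le_succ fun N => by simp [sum_range_succ, hf N]) fun b => ?_
  obtain ⟨_, ⟨i, rfl⟩, hi⟩ := not_bddAbove_iff.1 h b
  exact ⟨i + 1, hi.le.trans (single_le_sum (fun j _ => hf j) (self_mem_range_succ i))⟩

lemma not_tendsto_sum_range_of_not_bddAbove_norm {E : Type*} [NormedAddCommGroup E] {f : ℕ → E}
    (h : ¬ BddAbove (Set.range fun n => ‖f n‖)) (L : E) :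
    ¬ Tendsto (fun N => ∑ i ∈ range N, f i) atTop (𝓝 L) := by
  intro hL
  have hf : Tendsto f atTop (𝓝 0) := by
    simpa [sum_range_succ] using (hL.comp (tendsto_add_atTop_nat 1)).sub hL
  exact h hf.norm.bddAbove_range

lemma one_le_sum_choose_mul_choose_mul_choose {m : ℕ} (hm : 0 < m) (n k : ℕ) :
    1 ≤ ∑ s ∈ range m, (m.choose (s + 1) : ℝ) * ((k - 1).choose s : ℝ) *
      ((n + k - s - 1).choose (n - 1) : ℝ) := by
  have hterm : 0 < m.choose (0 + 1) * (k - 1).choose 0 * (n + k - 0 - 1).choose (n - 1) :=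
    Nat.mul_pos (Nat.mul_pos (Nat.choose_pos (by omega)) (Nat.choose_pos (Nat.zero_le _)))
      (Nat.choose_pos (by omega))
  refine le_trans ?_ (single_le_sum (fun s _ => by positivity) (mem_range.2 hm))
  exact_mod_cast hterm

lemma one_le_factorial_mul_factorial_div_factorial_mul_pow (d k : ℕ) :
    1 ≤ (d.factorial : ℝ) * k.factorial / (k + d).factorial * ((k : ℝ) + 1) ^ d := by
  have hchoose : ((d + k).choose d : ℝ) = (d + k).factorial / (d.factorial * k.factorial) :=
    Nat.cast_add_choose ℝ
  have hle : ((k + d).choose d : ℝ) ≤ ((k : ℝ) + 1) ^ d := by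
    exact_mod_cast Nat.choose_add_le_add_one_pow k d
  have hpos : (0 : ℝ) < (k + d).choose d := by exact_mod_cast Nat.choose_pos (by omega)
  rw [add_comm d k] at hchoose
  rw [← inv_div, ← hchoose, inv_mul_eq_div, one_le_div hpos]
  exact hle

theorem not_bddAbove_lubkinTerm {a : ℝ} (ha : 2 < a) {c : ℕ → ℝ} {d : ℕ}
    (hc : ∀ᶠ k in atTop, 1 ≤ c k * ((k : ℝ) + 1) ^ d) :
    ¬ BddAbove (Set.range (lubkinTerm a (binomialShift (-a⁻¹) c))) := by
  intro hbdd
  have ha₀ : 0 < a := by linarith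
  have hinv : |a⁻¹| = a⁻¹ := abs_of_pos (inv_pos.2 ha₀)
  obtain ⟨K, hK₀, hK⟩ := exists_abs_le_mul_sq_mul_inv_pow_of_bddAbove ha₀ hbdd
  have hmono : Monotone fun j : ℕ => K * ((j : ℝ) + 1) ^ 2 := fun i j hij => by
    dsimp only
    gcongr
  have hup (k : ℕ) : c k ≤ K * ((k : ℝ) + 1) ^ 2 * (2 / a) ^ k := by
    have h := abs_binomialShift_le (A := binomialShift (-a⁻¹) c) hmono (by rwa [hinv]) k
    rw [binomialShift_binomialShift_neg, hinv, ← div_eq_mul_inv] at h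
    exact (le_abs_self _).trans h
  have hlim := (tendsto_add_one_pow_mul_pow (by positivity) ((div_lt_one ha₀).2 ha)
    (d + 2)).const_mul K
  rw [mul_zero] at hlim
  obtain ⟨k, hk, hck⟩ := ((hlim.eventually (gt_mem_nhds one_pos)).and hc).exists
  have : c k * ((k : ℝ) + 1) ^ d ≤ K * (((k : ℝ) + 1) ^ (d + 2) * (2 / a) ^ k) :=
    calc c k * ((k : ℝ) + 1) ^ d
        ≤ K * ((k : ℝ) + 1) ^ 2 * (2 / a) ^ k * ((k : ℝ) + 1) ^ d := by gcongr; exact hup k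
      _ = _ := by ring
  linarith

theorem lubkin_series_diverges_of_three_le_general (m n : ℕ) (hm : 3 ≤ m) (hn : 1 ≤ n)
    (c : ℕ → ℝ)
    (hck : ∀ k : ℕ, 1 ≤ k → c k =
      ((m * n - 1).factorial : ℝ) * (k.factorial : ℝ) / ((m * n + k - 1).factorial : ℝ) *
        ∑ s ∈ Finset.range m,
          (m.choose (s + 1) : ℝ) * ((k - 1).choose s : ℝ) *
            ((n + k - s - 1).choose (n - 1) : ℝ)) :
    Filter.Tendsto
      (fun N : ℕ => ∑ r ∈ Finset.range N,
        ((m : ℝ) ^ (r + 1) / (((r : ℝ) + 1) * ((r : ℝ) + 2))) *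
          |∑ k ∈ Finset.range (r + 3),
            ((r + 2).choose k : ℝ) * (-1 : ℝ) ^ (r + 2 - k) *
              ((m : ℝ) ^ k / (m : ℝ) ^ (r + 2)) * c k|)
      Filter.atTop Filter.atTop ∧
    ¬ ∃ L : ℝ, Filter.Tendsto
      (fun N : ℕ => ∑ r ∈ Finset.range N,
        ((-1 : ℝ) ^ (r + 1) * (m : ℝ) ^ (r + 1) / (((r : ℝ) + 1) * ((r : ℝ) + 2))) *
          ∑ k ∈ Finset.range (r + 3),
            ((r + 2).choose k : ℝ) * (-1 : ℝ) ^ (r + 2 - k) *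
              ((m : ℝ) ^ k / (m : ℝ) ^ (r + 2)) * c k)
      Filter.atTop (nhds L) := by
  have hm₀ : (m : ℝ) ≠ 0 := by norm_cast; omega
  simp only [sum_choose_neg_one_pow_mul_div_pow_eq_binomialShift hm₀]
  have hc : ∀ᶠ k in atTop, 1 ≤ c k * ((k : ℝ) + 1) ^ (m * n - 1) := by
    filter_upwards [eventually_ge_atTop 1] with k hk
    have hmn : 1 ≤ m * n := Nat.one_le_iff_ne_zero.2 (by positivity)
    rw [hck k hk, show m * n + k - 1 = k + (m * n - 1) by omega, mul_right_comm]
    exact one_le_mul_of_one_le_of_one_le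
      (one_le_factorial_mul_factorial_div_factorial_mul_pow _ _)
      (one_le_sum_choose_mul_choose_mul_choose (by omega) n k)
  have hterms := not_bddAbove_lubkinTerm (a := m) (by exact_mod_cast (show 2 < m by omega)) hc
  refine ⟨tendsto_sum_range_atTop_of_not_bddAbove (fun r => by positivity) hterms, ?_⟩
  rintro ⟨L, hL⟩
  refine not_tendsto_sum_range_of_not_bddAbove_norm ?_ L hL
  convert hterms using 3
  ext r
  simp [lubkinTerm, abs_of_nonneg, add_nonneg]

/-- Divergence half of the paper's main theorem: for integers `m ≥ 3`, `n ≥ 1`, Lubkin's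
series diverges absolutely, i.e. the partial sums of
`∑_{r=1}^∞ (m^r/(r(r+1)))·|⟨Tr[(ρ_m^{mn} − Id/m)^{r+1}]⟩|` tend to `+∞`, and in particular
the partial sums of the signed series `∑_{r=1}^∞ ((−1)^r m^r/(r(r+1)))·⟨Tr[(ρ_m^{mn} − Id/m)^{r+1}]⟩`
do not converge.  Here `⟨Tr[(ρ_m^{mn} − Id/m)^{r+1}]⟩ = ∑_{k=0}^{r+1} C(r+1,k)(−1)^{r+1−k} m^{k−r−1} c_k`
with `c 0 = min m n` and, for `k ≥ 1`,
`c k = ((mn−1)!·k!/(mn+k−1)!)·∑_{s=0}^{m−1} C(m,s+1)·C(k−1,s)·C(n+k−s−1,n−1)`.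
(The series index is shifted: the summand at `r : ℕ` below is the term of index `r+1`.) -/
theorem lubkin_series_diverges_of_three_le (m n : ℕ) (hm : 3 ≤ m) (hn : 1 ≤ n)
    (c : ℕ → ℝ) (hc0 : c 0 = (min m n : ℕ))
    (hck : ∀ k : ℕ, 1 ≤ k → c k =
      ((m * n - 1).factorial : ℝ) * (k.factorial : ℝ) / ((m * n + k - 1).factorial : ℝ) *
        ∑ s ∈ Finset.range m,
          (m.choose (s + 1) : ℝ) * ((k - 1).choose s : ℝ) *
            ((n + k - s - 1).choose (n - 1) : ℝ)) :
    Filter.Tendsto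
      (fun N : ℕ => ∑ r ∈ Finset.range N,
        ((m : ℝ) ^ (r + 1) / (((r : ℝ) + 1) * ((r : ℝ) + 2))) *
          |∑ k ∈ Finset.range (r + 3),
            ((r + 2).choose k : ℝ) * (-1 : ℝ) ^ (r + 2 - k) *
              ((m : ℝ) ^ k / (m : ℝ) ^ (r + 2)) * c k|)
      Filter.atTop Filter.atTop ∧
    ¬ ∃ L : ℝ, Filter.Tendsto
      (fun N : ℕ => ∑ r ∈ Finset.range N,
        ((-1 : ℝ) ^ (r + 1) * (m : ℝ) ^ (r + 1) / (((r : ℝ) + 1) * ((r : ℝ) + 2))) *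
          ∑ k ∈ Finset.range (r + 3),
            ((r + 2).choose k : ℝ) * (-1 : ℝ) ^ (r + 2 - k) *
              ((m : ℝ) ^ k / (m : ℝ) ^ (r + 2)) * c k)
      Filter.atTop (nhds L) :=
  lubkin_series_diverges_of_three_le_general m n hm hn c hck
end

section
/- For m = 2 and every integer n ≥ 1, Lubkin's series converges absolutely: ∑_{r=1}^∞ (2^r/(r(r+1))) · |∑_{k=0}^{r+1} C(r+1,k)·(−1)^{r+1−k}·2^{k−r−1}·c_k| < +∞, where c_0 = min(2,n) and, for k ≥ 1, c_k = ((2n−1)!·k!/(2n+k−1)!) · ∑_{s=0}^{1} C(2,s+1)·C(k−1,s)·C(n+k−s−1,n−1). -/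
/-!
For `m = 2` the reduced state has eigenvalues `x` and `1 - x`, so the mean traces are moments
`c_k = ∫₀¹ x^k w(x) dx` of a nonnegative weight `w` on `[0, 1]` (for `n = 1` the state is pure and
`c_k = 1^k`). The binomial sum in the series is then the moment `∫₀¹ (x - 1/2)^(r+1) w(x) dx`
about `1/2`, bounded by `2^-(r+1) c_0` because `|x - 1/2| ≤ 1/2` on `[0, 1]`. This cancels the
factor `2^r`, and the terms of the series are `O(1/r²)`.
-/

open intervalIntegral Set Finset Nat
open MeasureTheory (volume)

section MomentAboutHalf

/-- If `c k = Tr ρ^k` for a state `ρ` on `ℂ²`, then `momentAboutHalf c p = Tr (ρ - Id/2)^p`. -/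
noncomputable def momentAboutHalf (c : ℕ → ℝ) (p : ℕ) : ℝ :=
  ∑ k ∈ range (p + 1), (p.choose k : ℝ) * (-1) ^ (p - k) * (2 ^ k / 2 ^ p) * c k

theorem momentAboutHalf_pow (x : ℝ) (p : ℕ) :
    momentAboutHalf (fun k => x ^ k) p = (x - 1 / 2) ^ p := by
  have h2 : (2 : ℝ) ^ p ≠ 0 := by positivity
  rw [show x - 1 / 2 = (2 * x + -1) / 2 by ring, div_pow, add_pow, Finset.sum_div,
    momentAboutHalf]
  refine Finset.sum_congr rfl fun k _ => ?_
  rw [mul_pow]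
  field_simp

variable {w : ℝ → ℝ}

theorem momentAboutHalf_integral (hw : IntervalIntegrable w volume 0 1) (p : ℕ) :
    momentAboutHalf (fun k => ∫ x in (0:ℝ)..1, x ^ k * w x) p
      = ∫ x in (0:ℝ)..1, (x - 1 / 2) ^ p * w x := by
  have hint : ∀ k : ℕ, IntervalIntegrable (fun x => x ^ k * w x) volume 0 1 := fun k =>
    hw.continuousOn_mul (continuous_pow k).continuousOn
  calc momentAboutHalf (fun k => ∫ x in (0:ℝ)..1, x ^ k * w x) p
      = ∑ k ∈ range (p + 1), ∫ x in (0:ℝ)..1,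
          (p.choose k : ℝ) * (-1) ^ (p - k) * (2 ^ k / 2 ^ p) * (x ^ k * w x) :=
        Finset.sum_congr rfl fun k _ => (integral_const_mul _ _).symm
    _ = ∫ x in (0:ℝ)..1, (x - 1 / 2) ^ p * w x := by
        rw [← integral_finsetSum fun k _ => (hint k).const_mul _]
        refine integral_congr fun x _ => ?_
        simp only [← momentAboutHalf_pow, momentAboutHalf, Finset.sum_mul, mul_assoc]

theorem abs_integral_sub_half_pow_mul_le (hw : IntervalIntegrable w volume 0 1)
    (hw0 : ∀ x ∈ Icc (0:ℝ) 1, 0 ≤ w x) (p : ℕ) :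
    |∫ x in (0:ℝ)..1, (x - 1 / 2) ^ p * w x| ≤ (1 / 2) ^ p * ∫ x in (0:ℝ)..1, w x := by
  rw [← integral_const_mul]
  refine (abs_integral_le_integral_abs zero_le_one).trans <|
    integral_mono_on zero_le_one
      (hw.continuousOn_mul ((continuous_pow p).comp (continuous_sub_right _)).continuousOn).abs
      (hw.const_mul _) fun x hx => ?_
  rw [abs_mul, abs_pow, abs_of_nonneg (hw0 x hx)]
  gcongr
  · exact hw0 x hx
  · rw [abs_le]
    constructor
    · linarith [hx.1]
    · linarith [hx.2]

theorem abs_momentAboutHalf_le_of_eq_integral {c : ℕ → ℝ}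
    (hw : IntervalIntegrable w volume 0 1) (hw0 : ∀ x ∈ Icc (0:ℝ) 1, 0 ≤ w x)
    (hc : ∀ k, c k = ∫ x in (0:ℝ)..1, x ^ k * w x) (p : ℕ) :
    |momentAboutHalf c p| ≤ (1 / 2) ^ p * c 0 := by
  rw [funext hc, momentAboutHalf_integral hw]
  simpa using abs_integral_sub_half_pow_mul_le hw hw0 p

end MomentAboutHalf

theorem summable_of_abs_le_mul_half_pow {a : ℕ → ℝ} {C : ℝ}
    (ha : ∀ p, |a p| ≤ C * (1 / 2) ^ p) :
    Summable fun r : ℕ => (2 : ℝ) ^ (r + 1) / ((r + 1) * (r + 2)) * |a (r + 2)| := by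
  have hsq : Summable fun r : ℕ => 1 / ((r : ℝ) + 1) ^ 2 := by
    simpa using (summable_nat_add_iff 1).mpr (Real.summable_one_div_nat_pow.mpr one_lt_two)
  refine Summable.of_nonneg_of_le (fun r => by positivity) (fun r => ?_) (hsq.mul_left (C / 2))
  have hC : 0 ≤ C := (abs_nonneg _).trans ((ha 0).trans_eq (by simp))
  calc (2 : ℝ) ^ (r + 1) / ((r + 1) * (r + 2)) * |a (r + 2)|
      ≤ (2 : ℝ) ^ (r + 1) / ((r + 1) * (r + 2)) * (C * (1 / 2) ^ (r + 2)) := by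
        gcongr
        exact ha _
    _ = C / 2 * (1 / ((r + 1) * (r + 2))) := by
        rw [one_div_pow]
        field_simp
        ring
    _ ≤ C / 2 * (1 / ((r : ℝ) + 1) ^ 2) := by
        gcongr
        linarith

theorem integral_pow_mul_one_sub_pow (a b : ℕ) :
    ∫ x in (0:ℝ)..1, x ^ a * (1 - x) ^ b = (a ! * b ! / (a + b + 1)! : ℝ) := by
  have h := Complex.betaIntegral_eq_Gamma_mul_div (a + 1) (b + 1)
    (by simp; positivity) (by simp; positivity)
  rw [show (a + 1 + (b + 1) : ℂ) = ((a + b + 1 : ℕ) : ℂ) + 1 by push_cast; ring,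
    Complex.Gamma_nat_eq_factorial, Complex.Gamma_nat_eq_factorial,
    Complex.Gamma_nat_eq_factorial, Complex.betaIntegral] at h
  simp only [add_sub_cancel_right, Complex.cpow_natCast] at h
  apply Complex.ofReal_injective
  rw [← integral_ofReal]
  push_cast
  exact h

/-- The paper's `c_k` for `k ≥ 1`; at `k = 0` the formula does not give `c_0 = min m n`. -/
noncomputable def lubkinCoeff (m n k : ℕ) : ℝ :=
  ((m * n - 1)! : ℝ) * (k ! : ℝ) / ((m * n + k - 1)! : ℝ) *
    ∑ s ∈ range m, (m.choose (s + 1) : ℝ) * ((k - 1).choose s : ℝ) *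
      ((n + k - s - 1).choose (n - 1) : ℝ)

theorem lubkinCoeff_two_one {k : ℕ} (hk : 1 ≤ k) : lubkinCoeff 2 1 k = 1 := by
  obtain ⟨j, rfl⟩ := Nat.exists_eq_add_of_le' hk
  simp only [lubkinCoeff, mul_one, Nat.add_one_sub_one, factorial_one, cast_one, one_mul,
    add_succ_sub_one, add_tsub_cancel_right, tsub_self, choose_zero_right, sum_range_succ,
    Finset.range_one, sum_singleton, zero_add, choose_succ_self_right, reduceAdd, cast_ofNat,
    choose_self, choose_one_right]
  rw [show 2 + j = j + 1 + 1 by ring, Nat.factorial_succ (j + 1)]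
  push_cast
  field_simp
  ring

/-- Twice the eigenvalue density of the reduced state for `m = 2`, `n = a + 2`: the eigenvalues
`x, 1 - x` have joint density proportional to `x^a (1 - x)^a (x - (1 - x))²`. -/
noncomputable def lubkinWeight (a : ℕ) (x : ℝ) : ℝ :=
  (2 * a + 3)! / ((a + 1)! * a !) * (x ^ a * (1 - x) ^ a * (1 - 2 * x) ^ 2)

theorem continuous_lubkinWeight (a : ℕ) : Continuous (lubkinWeight a) := by
  unfold lubkinWeight
  fun_prop

theorem lubkinWeight_nonneg (a : ℕ) {x : ℝ} (hx : x ∈ Icc (0:ℝ) 1) : 0 ≤ lubkinWeight a x := by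
  have hx0 := hx.1
  have hx1 : 0 ≤ 1 - x := by linarith [hx.2]
  unfold lubkinWeight
  positivity

theorem integral_pow_mul_lubkinWeight (a k : ℕ) :
    ∫ x in (0:ℝ)..1, x ^ k * lubkinWeight a x
      = (2 * a + 3)! * (k + a)! * (k ^ 2 + k + 2 * a + 2) / ((a + 1)! * (k + 2 * a + 3)!) := by
  -- `(1 - 2x)² = (1 - x)² - 2x(1 - x) + x²` splits the moment into three Beta integrals.
  have hexpand : ∀ x : ℝ, x ^ k * lubkinWeight a x = (2 * a + 3)! / ((a + 1)! * a !) *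
      (x ^ (k + a) * (1 - x) ^ (a + 2) - 2 * (x ^ (k + a + 1) * (1 - x) ^ (a + 1))
        + x ^ (k + a + 2) * (1 - x) ^ a) := fun x => by
    rw [lubkinWeight]
    ring
  have hint : ∀ i j : ℕ, IntervalIntegrable (fun x : ℝ => x ^ i * (1 - x) ^ j) volume 0 1 :=
    fun i j => (by fun_prop : Continuous _).intervalIntegrable 0 1
  simp_rw [hexpand]
  rw [integral_const_mul, integral_add ((hint _ _).sub ((hint _ _).const_mul 2)) (hint _ _),
    integral_sub (hint _ _) ((hint _ _).const_mul 2), integral_const_mul,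
    integral_pow_mul_one_sub_pow, integral_pow_mul_one_sub_pow, integral_pow_mul_one_sub_pow,
    show k + a + (a + 2) + 1 = k + 2 * a + 3 by ring,
    show k + a + 1 + (a + 1) + 1 = k + 2 * a + 3 by ring,
    show k + a + 2 + a + 1 = k + 2 * a + 3 by ring]
  simp only [Nat.factorial_succ, Nat.add_succ]
  push_cast
  field_simp
  ring

theorem integral_lubkinWeight (a : ℕ) : ∫ x in (0:ℝ)..1, lubkinWeight a x = 2 := by
  have h := integral_pow_mul_lubkinWeight a 0
  simp only [pow_zero, one_mul, Nat.cast_zero, zero_add] at h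
  rw [h, Nat.factorial_succ a]
  push_cast
  field_simp
  ring

theorem lubkinCoeff_two_add_two {a k : ℕ} (hk : 1 ≤ k) :
    lubkinCoeff 2 (a + 2) k = ∫ x in (0:ℝ)..1, x ^ k * lubkinWeight a x := by
  obtain ⟨j, rfl⟩ := Nat.exists_eq_add_of_le' hk
  rw [integral_pow_mul_lubkinWeight, lubkinCoeff, show 2 * (a + 2) - 1 = 2 * a + 3 by omega,
    show 2 * (a + 2) + (j + 1) - 1 = j + 1 + 2 * a + 3 by omega,
    show a + 2 - 1 = a + 1 by omega, show j + 1 + a = a + 1 + j by omega]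
  simp only [Finset.sum_range_succ, Finset.sum_range_zero, add_tsub_cancel_right,
    show a + 2 + (j + 1) - 0 - 1 = a + 1 + (j + 1) by omega,
    show a + 2 + (j + 1) - 1 - 1 = a + 1 + j by omega, Nat.cast_add_choose]
  rw [show a + 1 + (j + 1) = a + 1 + j + 1 by ring, Nat.factorial_succ (a + 1 + j),
    Nat.factorial_succ j]
  simp only [Nat.choose_zero_right, Nat.choose_one_right, Nat.choose_self, zero_add,
    Nat.reduceAdd]
  push_cast
  field_simp
  ring

/-- Convergence half of the paper's main theorem: for `m = 2` and every integer `n ≥ 1`,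
Lubkin's series converges absolutely:
`∑_{r=1}^∞ (2^r/(r(r+1)))·|⟨Tr[(ρ_2^{2n} − Id/2)^{r+1}]⟩| < +∞`, where
`⟨Tr[(ρ_2^{2n} − Id/2)^{r+1}]⟩ = ∑_{k=0}^{r+1} C(r+1,k)(−1)^{r+1−k} 2^{k−r−1} c_k`
with `c 0 = min 2 n` and, for `k ≥ 1`,
`c k = ((2n−1)!·k!/(2n+k−1)!)·∑_{s=0}^{1} C(2,s+1)·C(k−1,s)·C(n+k−s−1,n−1)`.
(The series index is shifted: the summand at `r : ℕ` below is the term of index `r+1`.) -/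
theorem lubkin_series_converges_of_two (n : ℕ) (hn : 1 ≤ n)
    (c : ℕ → ℝ) (hc0 : c 0 = (min 2 n : ℕ))
    (hck : ∀ k : ℕ, 1 ≤ k → c k =
      ((2 * n - 1).factorial : ℝ) * (k.factorial : ℝ) / ((2 * n + k - 1).factorial : ℝ) *
        ∑ s ∈ Finset.range 2,
          (Nat.choose 2 (s + 1) : ℝ) * ((k - 1).choose s : ℝ) *
            ((n + k - s - 1).choose (n - 1) : ℝ)) :
    Summable (fun r : ℕ =>
      ((2 : ℝ) ^ (r + 1) / (((r : ℝ) + 1) * ((r : ℝ) + 2))) *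
        |∑ k ∈ Finset.range (r + 3),
          ((r + 2).choose k : ℝ) * (-1 : ℝ) ^ (r + 2 - k) *
            ((2 : ℝ) ^ k / (2 : ℝ) ^ (r + 2)) * c k|) := by
  suffices hmoment : ∀ p, |momentAboutHalf c p| ≤ 2 * (1 / 2) ^ p from
    (summable_of_abs_le_mul_half_pow hmoment).congr fun _ => rfl
  rcases hn.eq_or_lt with rfl | hn2
  · have hc : c = fun k => (1 : ℝ) ^ k := funext fun k => by
      rcases k.eq_zero_or_pos with rfl | hk
      · simpa using hc0
      · simpa using (hck k hk).trans (lubkinCoeff_two_one hk)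
    intro p
    rw [hc, momentAboutHalf_pow]
    norm_num
  · obtain ⟨a, rfl⟩ := Nat.exists_eq_add_of_le' (hn2 : 2 ≤ n)
    have hc : ∀ k, c k = ∫ x in (0:ℝ)..1, x ^ k * lubkinWeight a x := fun k => by
      rcases k.eq_zero_or_pos with rfl | hk
      · simpa [integral_lubkinWeight] using hc0
      · exact (hck k hk).trans (lubkinCoeff_two_add_two hk)
    have hc2 : c 0 = 2 := by simpa using hc0
    intro p
    simpa [hc2, mul_comm] using abs_momentAboutHalf_le_of_eq_integral
      ((continuous_lubkinWeight a).intervalIntegrable 0 1) (fun x hx => lubkinWeight_nonneg a hx)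
      hc p
end

section
/- For all integers m, n with 1 ≤ m ≤ n, the function f : ℝ → ℝ defined for r near 1 by f(r) = (Γ(mn)/(r·Γ(mn+r))) · ∑_{k=0}^{m−1} (−1)^k Γ(m+r−k)Γ(n+r−k)·(1/Γ(r−k)) / (k!·Γ(m−k)·Γ(n−k)) (with the convention 1/Γ(x) = 0 at nonpositive integers x, so that each summand is a smooth function of r) is differentiable at r = 1, and −f′(1) = ∑_{k=n+1}^{mn} 1/k − (m−1)/(2n). -/
/-!
For `k ≥ 1` the `k`-th summand vanishes at `r = 1`, because `1 / Γ` has a simple zero at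
`1 - k` with derivative `(-1)^(k-1) (k-1)!` there; so its contribution to `f'(1)` is just
`-(m-k)(n-k)/k`. The `k = 0` summand is `Γ(m+r)Γ(n+r) / (Γ(r)Γ(m)Γ(n))`, whose derivative at `1`
comes from `Γ'(j+1) = j! (H_j - γ)`, and so does that of the prefactor `Γ(mn) / (rΓ(mn+r))`.
The Euler–Mascheroni constant `γ` cancels, and summing `(m-k)(n-k)/k` leaves
`H_{mn} - H_n - (m-1)/(2n)`.
-/

open Real Finset Nat

namespace Real

theorem Gamma_inv_eq_mul_Gamma_add_one_inv (s : ℝ) : (Gamma s)⁻¹ = s * (Gamma (s + 1))⁻¹ := by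
  rcases ne_or_eq s 0 with hs | rfl
  · rw [Gamma_add_one hs, mul_inv, mul_inv_cancel_left₀ hs]
  · rw [zero_add, Gamma_zero, inv_zero, zero_mul]

theorem hasDerivAt_Gamma_inv_one :
    HasDerivAt (fun s => (Gamma s)⁻¹) eulerMascheroniConstant 1 := by
  simpa using hasDerivAt_Gamma_one.fun_inv (by simp)

theorem hasDerivAt_Gamma_inv_neg_nat (k : ℕ) :
    HasDerivAt (fun s => (Gamma s)⁻¹) ((-1) ^ k * k !) (-k) := by
  have hrec (x : ℝ) {d : ℝ} (hd : HasDerivAt (fun s => (Gamma s)⁻¹) d (x + 1)) :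
      HasDerivAt (fun s => (Gamma s)⁻¹) ((Gamma (x + 1))⁻¹ + x * d) x := by
    rw [funext Gamma_inv_eq_mul_Gamma_add_one_inv]
    simpa using (hasDerivAt_id x).fun_mul (hd.comp_add_const x 1)
  induction k with
  | zero => simpa using hrec 0 (by simpa using hasDerivAt_Gamma_inv_one)
  | succ k ih =>
    have h := hrec (-(k + 1 : ℕ)) (by convert ih using 2; push_cast; ring)
    rw [show (-((k + 1 : ℕ) : ℝ) + 1) = -k by push_cast; ring, Gamma_neg_nat_eq_zero] at h
    convert h using 1
    push_cast [factorial_succ, pow_succ]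
    ring

theorem factorial_eq_mul_Gamma {m : ℕ} (hm : m ≠ 0) : (m ! : ℝ) = m * Gamma m := by
  rw [← Gamma_nat_eq_factorial, Gamma_add_one (by exact_mod_cast hm)]

theorem Gamma_one_sub_natCast_succ (k : ℕ) : Gamma (1 - ((k + 1 : ℕ) : ℝ)) = 0 := by
  convert Gamma_neg_nat_eq_zero k using 2
  push_cast
  ring

theorem differentiableAt_Gamma_of_pos {s : ℝ} (hs : 0 < s) : DifferentiableAt ℝ Gamma s :=
  differentiableAt_Gamma fun j => by linarith [(j.cast_nonneg : (0 : ℝ) ≤ j)]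

end Real

theorem HasDerivAt.mul_of_eq_zero {𝕜 : Type*} [NontriviallyNormedField 𝕜] {u g : 𝕜 → 𝕜}
    {g' a : 𝕜} (hu : DifferentiableAt 𝕜 u a) (hg : HasDerivAt g g' a) (hga : g a = 0) :
    HasDerivAt (fun x => u x * g x) (u a * g') a := by
  simpa [hga] using hu.hasDerivAt.fun_mul hg

noncomputable def pageTerm (m n k : ℕ) (r : ℝ) : ℝ :=
  (-1 : ℝ) ^ k * Gamma ((m : ℝ) + r - (k : ℝ)) * Gamma ((n : ℝ) + r - (k : ℝ)) *
    (1 / Gamma (r - (k : ℝ))) /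
    ((k.factorial : ℝ) * Gamma ((m : ℝ) - (k : ℝ)) * Gamma ((n : ℝ) - (k : ℝ)))

theorem hasDerivAt_pageTerm_succ {m n k : ℕ} (hkm : k + 1 < m) (hkn : k + 1 < n) :
    HasDerivAt (pageTerm m n (k + 1))
      (-(((m : ℝ) - (k + 1)) * ((n : ℝ) - (k + 1)) / (k + 1))) 1 := by
  have hm : (0 : ℝ) < m - (k + 1) := by rw [sub_pos]; exact_mod_cast hkm
  have hn : (0 : ℝ) < n - (k + 1) := by rw [sub_pos]; exact_mod_cast hkn
  have hg : HasDerivAt (fun r : ℝ => 1 / Gamma (r - ((k + 1 : ℕ) : ℝ))) ((-1) ^ k * k !) 1 := by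
    have h := hasDerivAt_Gamma_inv_neg_nat k
    rw [show (-k : ℝ) = 1 - ((k + 1 : ℕ) : ℝ) by push_cast; ring] at h
    simpa only [one_div] using h.comp_sub_const 1 _
  have hGamma {c : ℝ} (hc : 0 < c - (k + 1)) :
      DifferentiableAt ℝ (fun r : ℝ => Gamma (c + r - ((k + 1 : ℕ) : ℝ))) 1 := by
    refine (differentiableAt_Gamma_of_pos ?_).comp (1 : ℝ)
      ((differentiableAt_id.const_add c).sub_const ((k + 1 : ℕ) : ℝ))
    push_cast; linarith
  have hu := (((hGamma hm).const_mul ((-1 : ℝ) ^ (k + 1))).fun_mul (hGamma hn)).div_const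
    (((k + 1) ! : ℝ) * Gamma ((m : ℝ) - ((k + 1 : ℕ) : ℝ)) * Gamma ((n : ℝ) - ((k + 1 : ℕ) : ℝ)))
  have hg1 : 1 / Gamma (1 - ((k + 1 : ℕ) : ℝ)) = 0 := by rw [Gamma_one_sub_natCast_succ, div_zero]
  refine ((hg.mul_of_eq_zero hu hg1).congr_of_eventuallyEq
    (.of_forall fun r => by simp only [pageTerm]; ring)).congr_deriv ?_
  have hΓ (c : ℝ) (hc : 0 < c - (k + 1)) : Gamma (c + 1 - ((k + 1 : ℕ) : ℝ)) =
      (c - (k + 1)) * Gamma (c - ((k + 1 : ℕ) : ℝ)) := by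
    push_cast; rw [← Gamma_add_one hc.ne']; ring_nf
  rw [hΓ _ hm, hΓ _ hn]
  have := (Gamma_pos_of_pos hm).ne'
  have := (Gamma_pos_of_pos hn).ne'
  push_cast [factorial_succ, pow_succ] at *
  field_simp
  rw [← pow_mul, Even.neg_one_pow ⟨k, by ring⟩]

theorem pageTerm_zero (m n : ℕ) :
    pageTerm m n 0 =
      fun r => Gamma (m + r) * Gamma (n + r) * (Gamma r)⁻¹ / (Gamma m * Gamma n) := by
  funext r
  simp [pageTerm]

theorem pageTerm_zero_one {m n : ℕ} (hm : m ≠ 0) (hn : n ≠ 0) : pageTerm m n 0 1 = m * n := by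
  have := (Gamma_pos_of_pos (by positivity : (0 : ℝ) < m)).ne'
  have := (Gamma_pos_of_pos (by positivity : (0 : ℝ) < n)).ne'
  rw [pageTerm_zero]
  beta_reduce
  rw [Gamma_nat_eq_factorial, Gamma_nat_eq_factorial, factorial_eq_mul_Gamma hm,
    factorial_eq_mul_Gamma hn]
  simp only [Gamma_one, inv_one]
  field_simp

theorem hasDerivAt_pageTerm_zero {m n : ℕ} (hm : m ≠ 0) (hn : n ≠ 0) :
    HasDerivAt (pageTerm m n 0)
      (m * n * (harmonic m + harmonic n - eulerMascheroniConstant)) 1 := by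
  have := (Gamma_pos_of_pos (by positivity : (0 : ℝ) < m)).ne'
  have := (Gamma_pos_of_pos (by positivity : (0 : ℝ) < n)).ne'
  rw [pageTerm_zero]
  refine (((((hasDerivAt_Gamma_nat m).comp_const_add _ 1).fun_mul
    ((hasDerivAt_Gamma_nat n).comp_const_add _ 1)).fun_mul hasDerivAt_Gamma_inv_one).div_const
    _).congr_deriv ?_
  rw [Gamma_nat_eq_factorial, Gamma_nat_eq_factorial,
    factorial_eq_mul_Gamma hm, factorial_eq_mul_Gamma hn]
  simp only [Gamma_one, inv_one]
  field_simp
  ring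

theorem pageTerm_succ_one (m n k : ℕ) : pageTerm m n (k + 1) 1 = 0 := by
  simp only [pageTerm, Gamma_one_sub_natCast_succ, div_zero, mul_zero, zero_div]

theorem sum_range_sub_mul_sub_div (M N : ℝ) (j : ℕ) :
    ∑ k ∈ range j, (M - (k + 1)) * (N - (k + 1)) / (k + 1) =
      M * N * harmonic j - (M + N) * j + j * (j + 1) / 2 := by
  induction j with
  | zero => simp
  | succ j ih =>
    rw [sum_range_succ, ih, harmonic_succ]
    push_cast
    field_simp
    ring

theorem sum_pageTerm_one {m n : ℕ} (hm : m ≠ 0) (hn : n ≠ 0) :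
    ∑ k ∈ range m, pageTerm m n k 1 = m * n := by
  obtain ⟨j, rfl⟩ := exists_eq_succ_of_ne_zero hm
  simp [sum_range_succ', pageTerm_succ_one, pageTerm_zero_one hm hn]

theorem hasDerivAt_sum_pageTerm {m n : ℕ} (hm : m ≠ 0) (hmn : m ≤ n) :
    HasDerivAt (fun r => ∑ k ∈ range m, pageTerm m n k r)
      (m * n * (1 + harmonic n - eulerMascheroniConstant) + m * (m - 1) / 2) 1 := by
  obtain ⟨j, rfl⟩ := exists_eq_succ_of_ne_zero hm
  simp_rw [sum_range_succ']
  refine ((HasDerivAt.fun_sum fun k hk => hasDerivAt_pageTerm_succ (by simpa using hk)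
    (by simp at hk; omega)).add (hasDerivAt_pageTerm_zero hm (by omega))).congr_deriv ?_
  rw [sum_neg_distrib, sum_range_sub_mul_sub_div, harmonic_succ]
  push_cast
  field_simp
  ring

theorem hasDerivAt_Gamma_div_mul_Gamma_add {N : ℕ} (hN : N ≠ 0) :
    HasDerivAt (fun r => Gamma N / (r * Gamma (N + r)))
      (-(1 + harmonic N - eulerMascheroniConstant) / N) 1 := by
  have := (Gamma_pos_of_pos (by positivity : (0 : ℝ) < N)).ne'
  have hden := (hasDerivAt_id (1 : ℝ)).fun_mul ((hasDerivAt_Gamma_nat N).comp_const_add _ 1)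
  refine ((hasDerivAt_const (1 : ℝ) (Gamma N)).fun_div hden ?_).congr_deriv ?_
  all_goals simp only [id, one_mul, Gamma_nat_eq_factorial, factorial_eq_mul_Gamma hN]
  · positivity
  · field_simp
    ring

theorem sum_Icc_one_div_eq_harmonic_sub {a b : ℕ} (hab : a ≤ b) :
    ∑ k ∈ Icc (a + 1) b, (1 : ℝ) / k = harmonic b - harmonic a := by
  have harmonic_eq_sum_Ioc (c : ℕ) : (harmonic c : ℝ) = ∑ k ∈ Ioc 0 c, (1 : ℝ) / k := by
    simp [harmonic_eq_sum_Icc, ← Icc_add_one_left_eq_Ioc]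
  rw [Icc_add_one_left_eq_Ioc, harmonic_eq_sum_Ioc, harmonic_eq_sum_Ioc,
    ← sum_Ioc_consecutive _ (zero_le a) hab, add_sub_cancel_left]

/-- Appendix 1 (re-derivation of Page's formula): for integers `1 ≤ m ≤ n`, if `f` is
defined for `r` near `1` by
`f(r) = (Γ(mn)/(r·Γ(mn+r)))·∑_{k=0}^{m−1} (−1)^k Γ(m+r−k)Γ(n+r−k)·(1/Γ(r−k))/(k!·Γ(m−k)·Γ(n−k))`
(with `1/Γ = 0` at nonpositive integers, as holds for Mathlib's `Real.Gamma`), then `f`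
is differentiable at `r = 1` and `−f′(1) = ∑_{k=n+1}^{mn} 1/k − (m−1)/(2n)`. -/
theorem page_entropy_from_trace_powers (m n : ℕ) (hm : 1 ≤ m) (hmn : m ≤ n)
    (f : ℝ → ℝ)
    (hf : ∀ᶠ r in nhds (1 : ℝ), f r =
      (Real.Gamma ((m * n : ℕ) : ℝ) / (r * Real.Gamma (((m * n : ℕ) : ℝ) + r))) *
        ∑ k ∈ Finset.range m,
          (-1 : ℝ) ^ k * Real.Gamma ((m : ℝ) + r - (k : ℝ)) *
            Real.Gamma ((n : ℝ) + r - (k : ℝ)) * (1 / Real.Gamma (r - (k : ℝ))) /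
            ((k.factorial : ℝ) * Real.Gamma ((m : ℝ) - (k : ℝ)) *
              Real.Gamma ((n : ℝ) - (k : ℝ)))) :
    ∃ d : ℝ, HasDerivAt f d 1 ∧
      -d = (∑ k ∈ Finset.Icc (n + 1) (m * n), (1 : ℝ) / (k : ℝ)) -
        ((m : ℝ) - 1) / (2 * (n : ℝ)) := by
  have hm0 : m ≠ 0 := by omega
  have hn0 : n ≠ 0 := by omega
  have hmn0 : m * n ≠ 0 := mul_ne_zero hm0 hn0
  refine ⟨_, ((hasDerivAt_Gamma_div_mul_Gamma_add hmn0).fun_mul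
    (hasDerivAt_sum_pageTerm hm0 hmn)).congr_of_eventuallyEq hf, ?_⟩
  rw [sum_pageTerm_one hm0 hn0, sum_Icc_one_div_eq_harmonic_sub (Nat.le_mul_of_pos_left n hm),
    one_mul, Gamma_nat_eq_factorial, factorial_eq_mul_Gamma hmn0]
  have := (Gamma_pos_of_pos (by positivity : (0 : ℝ) < (m * n : ℕ))).ne'
  push_cast at *
  field_simp
  ring
end

section
/- For every positive integer k, the function r ↦ Γ′(r−k)/(Γ(r−k))^2 (i.e. ψ(r−k)/Γ(r−k), where ψ = Γ′/Γ is the digamma function) tends to (−1)^k·(k−1)! as r → 1 with r ≠ 1. -/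
/-!
The reciprocal `1/Γ` is smooth on all of `ℝ`, and away from the poles `Γ'/Γ² = -(1/Γ)'`, so the
limit is `-(1/Γ)'(1 - k)`. Differentiating `1/Γ(x) = x / Γ(x + 1)` and using that `1/Γ` vanishes
at the nonpositive integers gives `(1/Γ)'(-n) = -n · (1/Γ)'(1 - n)`, hence
`(1/Γ)'(-n) = (-1)^n n!`.
-/

open Filter Topology

theorem eventually_nhdsNE_ne_intCast (a : ℤ) : ∀ᶠ x in 𝓝[≠] (a : ℝ), ∀ z : ℤ, x ≠ (z : ℝ) := by
  filter_upwards [nhdsWithin_le_nhds (Ioo_mem_nhds (sub_one_lt (a : ℝ)) (lt_add_one (a : ℝ))),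
    self_mem_nhdsWithin] with x ⟨h1, h2⟩ hxa z rfl
  have : z = a := by
    have : a - 1 < z := by exact_mod_cast h1
    have : z < a + 1 := by exact_mod_cast h2
    omega
  exact hxa (congrArg Int.cast this)

namespace Real

theorem inv_Gamma_eq_self_mul_inv_Gamma_add_one (x : ℝ) :
    (Gamma x)⁻¹ = x * (Gamma (x + 1))⁻¹ := by
  rcases ne_or_eq x 0 with hx | rfl
  · rw [Gamma_add_one hx, mul_inv, mul_inv_cancel_left₀ hx]
  · rw [zero_add, Gamma_zero, inv_zero, zero_mul]

theorem contDiff_inv_Gamma : ContDiff ℝ ⊤ fun x : ℝ => (Gamma x)⁻¹ := by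
  have h := (Complex.differentiable_one_div_Gamma.contDiff (n := ⊤)).real_of_complex
  simpa only [Complex.Gamma_ofReal, ← Complex.ofReal_inv, Complex.ofReal_re] using h

theorem deriv_inv_Gamma_eq (x : ℝ) :
    deriv (fun y => (Gamma y)⁻¹) x =
      (Gamma (x + 1))⁻¹ + x * deriv (fun y => (Gamma y)⁻¹) (x + 1) := by
  have hg : Differentiable ℝ fun y : ℝ => (Gamma y)⁻¹ :=
    contDiff_inv_Gamma.differentiable (by simp)
  have h := ((hasDerivAt_id x).mul ((hg (x + 1)).hasDerivAt.comp_add_const x 1))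
    |>.congr_of_eventuallyEq (Eventually.of_forall inv_Gamma_eq_self_mul_inv_Gamma_add_one)
  simpa using h.deriv

theorem deriv_inv_Gamma_neg_nat (n : ℕ) :
    deriv (fun y => (Gamma y)⁻¹) (-n) = (-1) ^ n * n.factorial := by
  induction n with
  | zero => rw [Nat.cast_zero, neg_zero, deriv_inv_Gamma_eq]; simp
  | succ n ih =>
    have h : -((n + 1 : ℕ) : ℝ) + 1 = -n := by push_cast; ring
    rw [deriv_inv_Gamma_eq, h, ih, Gamma_neg_nat_eq_zero, inv_zero, Nat.factorial_succ]
    push_cast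
    ring

theorem deriv_Gamma_div_Gamma_sq {x : ℝ} (hx : ∀ m : ℕ, x ≠ -m) :
    deriv Gamma x / Gamma x ^ 2 = -deriv (fun y => (Gamma y)⁻¹) x := by
  rw [((differentiableAt_Gamma hx).hasDerivAt.fun_inv (Gamma_ne_zero hx)).deriv, neg_div, neg_neg]

theorem tendsto_deriv_Gamma_div_Gamma_sq_nhdsNE_neg_nat (n : ℕ) :
    Tendsto (fun x => deriv Gamma x / Gamma x ^ 2) (𝓝[≠] (-n : ℝ))
      (𝓝 ((-1) ^ (n + 1) * n.factorial)) := by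
  have hlim : Tendsto (fun x => -deriv (fun y => (Gamma y)⁻¹) x) (𝓝[≠] (-n : ℝ))
      (𝓝 (-deriv (fun y => (Gamma y)⁻¹) (-n))) :=
    ((contDiff_inv_Gamma.continuous_deriv (by simp)).neg.tendsto _).mono_left nhdsWithin_le_nhds
  rw [deriv_inv_Gamma_neg_nat, show -((-1 : ℝ) ^ n * n.factorial) = (-1) ^ (n + 1) * n.factorial by
    ring] at hlim
  have hpoles : ∀ᶠ x in 𝓝[≠] (-n : ℝ), ∀ z : ℤ, x ≠ (z : ℝ) := by
    simpa using eventually_nhdsNE_ne_intCast (-n)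
  refine hlim.congr' ?_
  filter_upwards [hpoles] with x hx
  exact (deriv_Gamma_div_Gamma_sq fun m => by simpa using hx (-m)).symm

end Real

/-- Key limit in Appendix 1: for a positive integer `k`, `ψ(r−k)/Γ(r−k) = Γ′(r−k)/Γ(r−k)²`
tends to `(−1)^k·(k−1)!` as `r → 1`, `r ≠ 1`. -/
theorem digamma_over_gamma_limit (k : ℕ) (hk : 1 ≤ k) :
    Filter.Tendsto
      (fun r : ℝ => deriv Real.Gamma (r - (k : ℝ)) / (Real.Gamma (r - (k : ℝ))) ^ 2)
      (nhdsWithin 1 {(1 : ℝ)}ᶜ)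
      (nhds ((-1 : ℝ) ^ k * ((k - 1).factorial : ℝ))) := by
  obtain ⟨n, rfl⟩ := Nat.exists_eq_add_of_le' hk
  have hshift : Tendsto (fun r : ℝ => r - ((n + 1 : ℕ) : ℝ)) (𝓝[≠] 1) (𝓝[≠] (-n : ℝ)) := by
    have h := ((hasDerivAt_id' (1 : ℝ)).sub_const ((n + 1 : ℕ) : ℝ)).tendsto_nhdsNE one_ne_zero
    rwa [show (1 : ℝ) - ((n + 1 : ℕ) : ℝ) = -n by push_cast; ring] at h
  rw [Nat.add_sub_cancel]
  exact (Real.tendsto_deriv_Gamma_div_Gamma_sq_nhdsNE_neg_nat n).comp hshift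
end

section
/- For every integer m ≥ 1 there exists a constant K > 0 such that for every integer n ≥ 1, |H_{mn} − H_n − (m−1)/(2n) − ln m + (m^2−1)/(2mn)| ≤ K/n^2; that is, the mean entropy ⟨S_{m,n}⟩ = H_{mn} − H_n − (m−1)/(2n) satisfies ⟨S_{m,n}⟩ = ln m − (m^2−1)/(2mn) + O(1/n^2) as n → ∞. -/
/-!
Comparing `H_N` with `log (2N + 1)` rather than `log N` is the point: `log (2k + 3) - log (2k + 1)`
is `2 artanh (1 / (2k + 2)) = 1 / (k + 1) + O(1 / k³)`, so `H_N - log (2N + 1)` changes by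
`O(1 / n³)` per step for `N ≥ n`, and by `O(1 / n²)` over the `(m - 1) n` steps from `n` to `mn`.
What is left is `log ((2mn + 1) / (2n + 1)) = log m + 1 / (2mn) - 1 / (2n) + O(1 / n²)`, whose
`1 / n` part is exactly `(m - 1) / (2n) - (m² - 1) / (2mn)`.
-/

/-- The `n`-th harmonic number `H_n = ∑_{k=1}^n 1/k`. -/
noncomputable def harmonicNum (n : ℕ) : ℝ := ∑ k ∈ Finset.range n, (1 : ℝ) / ((k : ℝ) + 1)

open Real

theorem abs_log_one_add_sub_self_le {y : ℝ} (hy : 0 ≤ y) : |log (1 + y) - y| ≤ y ^ 2 := by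
  have hpos : 0 < 1 + y := by linarith
  have upper : log (1 + y) ≤ y := by linarith [log_le_sub_one_of_pos hpos]
  have lower : y / (1 + y) ≤ log (1 + y) := by
    have := one_sub_inv_le_log_of_pos hpos
    rwa [show 1 - (1 + y)⁻¹ = y / (1 + y) by field_simp; ring] at this
  have gap : y - y / (1 + y) ≤ y ^ 2 := by
    rw [show y - y / (1 + y) = y ^ 2 / (1 + y) by field_simp; ring]
    exact div_le_self (sq_nonneg y) (by linarith)
  rw [abs_of_nonpos (by linarith)]
  linarith

theorem abs_log_one_add_sub_log_one_sub_sub_le {x : ℝ} (hx : |x| < 1) :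
    |log (1 + x) - log (1 - x) - 2 * x| ≤ 2 * |x| ^ 3 / (1 - |x|) := by
  have hplus := abs_log_sub_add_sum_range_le hx 2
  have hminus := abs_log_sub_add_sum_range_le (x := -x) (by rwa [abs_neg]) 2
  rw [abs_neg, sub_neg_eq_add] at hminus
  norm_num [Finset.sum_range_succ] at hplus hminus
  calc |log (1 + x) - log (1 - x) - 2 * x|
      = |(-x + x ^ 2 / 2 + log (1 + x)) - (x + x ^ 2 / 2 + log (1 - x))| := by congr 1; ring
    _ ≤ |x| ^ 3 / (1 - |x|) + |x| ^ 3 / (1 - |x|) := (abs_sub _ _).trans (add_le_add hminus hplus)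
    _ = 2 * |x| ^ 3 / (1 - |x|) := by ring

theorem abs_one_div_add_one_sub_log_sub_log_le (k : ℕ) :
    |1 / ((k : ℝ) + 1) - (log (2 * (k + 1) + 1) - log (2 * k + 1))| ≤
      1 / (2 * ((k : ℝ) + 1) ^ 3) := by
  set x : ℝ := 1 / (2 * (k + 1)) with hx
  have hx₀ : 0 < x := by positivity
  have hx₁ : x ≤ 1 / 2 := by
    rw [div_le_div_iff₀ (by positivity) two_pos]; linarith [(k.cast_nonneg : (0 : ℝ) ≤ k)]
  have hlog : log (2 * (k + 1) + 1) - log (2 * k + 1) = log (1 + x) - log (1 - x) := by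
    have hplus : 1 + x = (2 * (k + 1) + 1) / (2 * (k + 1)) := by rw [hx]; field_simp
    have hminus : 1 - x = (2 * k + 1) / (2 * (k + 1)) := by rw [hx]; field_simp; ring
    rw [hplus, hminus, log_div (by positivity) (by positivity),
      log_div (by positivity) (by positivity)]
    ring
  have bound := abs_log_one_add_sub_log_one_sub_sub_le (x := x) (by rw [abs_of_pos hx₀]; linarith)
  rw [abs_of_pos hx₀, show 2 * x = 1 / ((k : ℝ) + 1) by rw [hx]; field_simp] at bound
  rw [hlog, abs_sub_comm]
  calc _ ≤ 2 * x ^ 3 / (1 - x) := bound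
    _ ≤ 4 * x ^ 3 := by rw [div_le_iff₀ (by linarith)]; nlinarith [pow_pos hx₀ 3]
    _ = 1 / (2 * ((k : ℝ) + 1) ^ 3) := by rw [hx]; field_simp; ring

theorem harmonicNum_succ (k : ℕ) : harmonicNum (k + 1) = harmonicNum k + 1 / ((k : ℝ) + 1) :=
  Finset.sum_range_succ _ k

theorem abs_harmonicNum_sub_log_sub_le {n N : ℕ} (hnN : n ≤ N) :
    |harmonicNum N - log (2 * N + 1) - (harmonicNum n - log (2 * n + 1))| ≤
      ((N : ℝ) - n) / (2 * ((n : ℝ) + 1) ^ 3) := by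
  induction N, hnN using Nat.le_induction with
  | base => simp
  | succ N hnN ih =>
    have hstep := abs_one_div_add_one_sub_log_sub_log_le N
    have hmono : 1 / (2 * ((N : ℝ) + 1) ^ 3) ≤ 1 / (2 * ((n : ℝ) + 1) ^ 3) := by
      gcongr
    calc _ = |(harmonicNum N - log (2 * N + 1) - (harmonicNum n - log (2 * n + 1))) +
            (1 / ((N : ℝ) + 1) - (log (2 * (N + 1) + 1) - log (2 * N + 1)))| := by
          rw [harmonicNum_succ]; push_cast; congr 1; ring
      _ ≤ ((N : ℝ) - n) / (2 * ((n : ℝ) + 1) ^ 3) + 1 / (2 * ((n : ℝ) + 1) ^ 3) :=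
          (abs_add_le _ _).trans (add_le_add ih (hstep.trans hmono))
      _ = _ := by push_cast; ring

theorem abs_log_two_mul_add_one_sub_le {x : ℝ} (hx : 0 < x) :
    |log (2 * x + 1) - log (2 * x) - 1 / (2 * x)| ≤ 1 / (4 * x ^ 2) := by
  have hlog : log (2 * x + 1) = log (2 * x) + log (1 + 1 / (2 * x)) := by
    rw [← log_mul (by positivity) (by positivity)]
    congr 1; field_simp
  calc _ = |log (1 + 1 / (2 * x)) - 1 / (2 * x)| := by rw [hlog]; congr 1; ring
    _ ≤ (1 / (2 * x)) ^ 2 := abs_log_one_add_sub_self_le (by positivity)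
    _ = 1 / (4 * x ^ 2) := by ring

/-- Appendix 3: for every integer `m ≥ 1` there is `K > 0` such that for all `n ≥ 1`,
`|H_{mn} − H_n − (m−1)/(2n) − ln m + (m²−1)/(2mn)| ≤ K/n²`, i.e. the mean entropy
`⟨S_{m,n}⟩ = H_{mn} − H_n − (m−1)/(2n)` equals `ln m − (m²−1)/(2mn) + O(1/n²)`. -/
theorem mean_entropy_asymptotic (m : ℕ) (hm : 1 ≤ m) :
    ∃ K : ℝ, 0 < K ∧ ∀ n : ℕ, 1 ≤ n →
      |harmonicNum (m * n) - harmonicNum n - ((m : ℝ) - 1) / (2 * (n : ℝ)) -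
          Real.log (m : ℝ) + ((m : ℝ) ^ 2 - 1) / (2 * (m : ℝ) * (n : ℝ))| ≤
        K / (n : ℝ) ^ 2 := by
  refine ⟨(m : ℝ) / 2, by positivity, fun n hn => ?_⟩
  have hM : (1 : ℝ) ≤ m := by exact_mod_cast hm
  have hN : (1 : ℝ) ≤ n := by exact_mod_cast hn
  have hsum := abs_harmonicNum_sub_log_sub_le (Nat.le_mul_of_pos_left n hm)
  have hlog_mn := abs_log_two_mul_add_one_sub_le (x := m * n) (by positivity)
  have hlog_n := abs_log_two_mul_add_one_sub_le (x := n) (by positivity)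
  rw [Nat.cast_mul] at hsum
  have hsplit : log (2 * ((m : ℝ) * n)) = log m + log (2 * n) := by
    rw [mul_left_comm, log_mul (by positivity) (by positivity)]
  have hcorr : ((m : ℝ) - 1) / (2 * n) - ((m : ℝ) ^ 2 - 1) / (2 * m * n) =
      1 / (2 * (m * n)) - 1 / (2 * n) := by
    field_simp; ring
  have hcount : ((m : ℝ) * n - n) / (2 * ((n : ℝ) + 1) ^ 3) ≤ ((m : ℝ) - 1) / (2 * n ^ 2) := by
    have hcube : (n : ℝ) ^ 3 ≤ ((n : ℝ) + 1) ^ 3 := by gcongr; linarith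
    rw [div_le_div_iff₀ (by positivity) (by positivity)]
    nlinarith [mul_le_mul_of_nonneg_left hcube (by linarith : (0 : ℝ) ≤ 2 * ((m : ℝ) - 1))]
  have hsmall : 1 / (4 * ((m : ℝ) * n) ^ 2) ≤ 1 / (4 * n ^ 2) := by gcongr; nlinarith
  have htotal : ((m : ℝ) - 1) / (2 * n ^ 2) + 1 / (4 * n ^ 2) + 1 / (4 * n ^ 2) = m / 2 / n ^ 2 := by
    field_simp; ring
  rw [abs_le] at hsum hlog_mn hlog_n ⊢
  constructor <;> linarith
end

section
/- There exists a constant C > 0 such that for all integers m, n with 1 ≤ m ≤ n, |ln m − (H_{mn} − H_n − (m−1)/(2n)) − m/(2n)| ≤ C/(mn); that is, the deviation of the mean entropy from the maximal entropy satisfies ln m − ⟨S_{m,n}⟩ = m/(2n) + O(1/(mn)) uniformly over all 1 ≤ m ≤ n. -/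
/-!
Write `E k = log k - H_k + 1/(2k)`. The deficit `ln m - ⟨S_{m,n}⟩ - m/(2n)` equals
`E(mn) - E(n) - 1/(2mn)`, and `E k - E (k+1)` is the error of the trapezoid rule for
`∫_k^{k+1} dt/t`. Squeezing `log (1 + 1/k)` between `2/(2k+1)` and the trapezoid value
`(1/k + 1/(k+1))/2` puts this error in `[0, (1/k² - 1/(k+1)²)/8]`, so the increments
telescope to `0 ≤ E n - E (mn) ≤ 1/(8n²) ≤ 1/(8mn)` (using `m ≤ n`), giving `C = 1`.
-/

namespace Real

theorem log_one_add_inv_le {x : ℝ} (hx : 0 < x) :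
    log (1 + x⁻¹) ≤ (x⁻¹ + (x + 1)⁻¹) / 2 := by
  set u : ℝ := 1 / (2 * x + 1)
  have hu : 0 < u := by positivity
  have hu2 : u ^ 2 < 1 := by
    rw [sq_lt_one_iff₀ hu.le, div_lt_one (by positivity)]; linarith
  have hgeom : HasSum (fun k : ℕ => 2 * u ^ (2 * k + 1)) (2 * u * (1 - u ^ 2)⁻¹) := by
    simpa only [← pow_mul, mul_assoc, ← pow_succ'] using
      (hasSum_geometric_of_lt_one (sq_nonneg u) hu2).mul_left (2 * u)
  calc log (1 + x⁻¹) ≤ 2 * u * (1 - u ^ 2)⁻¹ := by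
        refine hasSum_le (fun k => ?_) (hasSum_log_one_add_inv hx) hgeom
        have hk : 1 / (2 * (k : ℝ) + 1) ≤ 1 := by
          rw [div_le_one (by positivity)]; linarith [k.cast_nonneg (α := ℝ)]
        have := pow_pos hu (2 * k + 1)
        nlinarith
    _ = (x⁻¹ + (x + 1)⁻¹) / 2 := by
        have h : 1 - u ^ 2 = 4 * x * (x + 1) / (2 * x + 1) ^ 2 := by
          simp only [u]; field_simp; ring
        rw [h]
        simp only [u]
        field_simp
        ring

end Real

/-- Tends to `-γ`, with error `O(1/k²)`. -/
noncomputable def eulerMaclaurinError (k : ℕ) : ℝ := Real.log k - harmonicNum k + 1 / (2 * k)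

theorem eulerMaclaurinError_sub_succ {k : ℕ} (hk : 0 < k) :
    eulerMaclaurinError k - eulerMaclaurinError (k + 1) =
      ((k : ℝ)⁻¹ + ((k : ℝ) + 1)⁻¹) / 2 - Real.log (1 + (k : ℝ)⁻¹) := by
  have hk' : (0 : ℝ) < k := by exact_mod_cast hk
  have hlog : Real.log ((k : ℝ) + 1) = Real.log k + Real.log (1 + (k : ℝ)⁻¹) := by
    rw [← Real.log_mul hk'.ne' (by positivity), mul_add, mul_inv_cancel₀ hk'.ne', mul_one]
  simp only [eulerMaclaurinError, harmonicNum, Finset.sum_range_succ]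
  push_cast
  rw [hlog]
  field_simp
  ring

theorem eulerMaclaurinError_sub_succ_mem_Icc {k : ℕ} (hk : 0 < k) :
    eulerMaclaurinError k - eulerMaclaurinError (k + 1) ∈
      Set.Icc 0 ((((k : ℝ) ^ 2)⁻¹ - (((k : ℝ) + 1) ^ 2)⁻¹) / 8) := by
  have hk' : (0 : ℝ) < k := by exact_mod_cast hk
  have hlower : 2 / (2 * (k : ℝ) + 1) ≤ Real.log (1 + (k : ℝ)⁻¹) := by
    convert Real.le_log_one_add_of_nonneg (inv_nonneg.2 hk'.le) using 1
    field_simp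
    ring
  rw [eulerMaclaurinError_sub_succ hk]
  refine ⟨sub_nonneg.2 (Real.log_one_add_inv_le hk'), ?_⟩
  calc ((k : ℝ)⁻¹ + ((k : ℝ) + 1)⁻¹) / 2 - Real.log (1 + (k : ℝ)⁻¹)
      ≤ ((k : ℝ)⁻¹ + ((k : ℝ) + 1)⁻¹) / 2 - 2 / (2 * (k : ℝ) + 1) := by gcongr
    _ = 1 / (2 * k * (k + 1) * (2 * k + 1)) := by field_simp; ring
    _ ≤ ((((k : ℝ) ^ 2)⁻¹ - (((k : ℝ) + 1) ^ 2)⁻¹) / 8) := by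
        rw [show ((((k : ℝ) ^ 2)⁻¹ - (((k : ℝ) + 1) ^ 2)⁻¹) / 8) =
          (2 * k + 1) / (8 * k ^ 2 * (k + 1) ^ 2) by field_simp; ring]
        rw [div_le_div_iff₀ (by positivity) (by positivity)]
        nlinarith [sq_nonneg (k : ℝ)]

theorem eulerMaclaurinError_sub_mem_Icc {n N : ℕ} (hn : 0 < n) (hnN : n ≤ N) :
    eulerMaclaurinError n - eulerMaclaurinError N ∈
      Set.Icc 0 ((((n : ℝ) ^ 2)⁻¹ - ((N : ℝ) ^ 2)⁻¹) / 8) := by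
  induction N, hnN using Nat.le_induction with
  | base => simp
  | succ N hnN ih =>
    obtain ⟨h₁, h₂⟩ := eulerMaclaurinError_sub_succ_mem_Icc (hn.trans_le hnN)
    push_cast at h₂ ⊢
    constructor <;> linarith [ih.1, ih.2]

/-- Appendix 3 footnote: there is `C > 0` such that uniformly over all integers `1 ≤ m ≤ n`,
`|ln m − ⟨S_{m,n}⟩ − m/(2n)| ≤ C/(mn)`, where `⟨S_{m,n}⟩ = H_{mn} − H_n − (m−1)/(2n)`. -/
theorem entropy_deficit_uniform :
    ∃ C : ℝ, 0 < C ∧ ∀ m n : ℕ, 1 ≤ m → m ≤ n →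
      |Real.log (m : ℝ) -
          (harmonicNum (m * n) - harmonicNum n - ((m : ℝ) - 1) / (2 * (n : ℝ))) -
          (m : ℝ) / (2 * (n : ℝ))| ≤
        C / ((m : ℝ) * (n : ℝ)) := by
  refine ⟨1, one_pos, fun m n hm hmn => ?_⟩
  have hn : 0 < n := by omega
  have hm' : (0 : ℝ) < m := by exact_mod_cast hm
  have hn' : (0 : ℝ) < n := by exact_mod_cast hn
  have hdeficit : Real.log (m : ℝ) -
      (harmonicNum (m * n) - harmonicNum n - ((m : ℝ) - 1) / (2 * (n : ℝ))) -
      (m : ℝ) / (2 * (n : ℝ)) =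
      -(eulerMaclaurinError n - eulerMaclaurinError (m * n)) - ((m : ℝ) * n)⁻¹ / 2 := by
    simp only [eulerMaclaurinError]
    push_cast
    rw [Real.log_mul hm'.ne' hn'.ne']
    field_simp
    ring
  obtain ⟨hD₀, hD⟩ := eulerMaclaurinError_sub_mem_Icc hn (Nat.le_mul_of_pos_left n hm)
  have hsq : ((n : ℝ) ^ 2)⁻¹ ≤ ((m : ℝ) * n)⁻¹ := by
    gcongr
    nlinarith [(Nat.cast_le (α := ℝ)).2 hmn]
  have hmn_inv_pos : 0 < ((m : ℝ) * n)⁻¹ := by positivity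
  have hN_inv_nonneg : 0 ≤ (((m * n : ℕ) : ℝ) ^ 2)⁻¹ := by positivity
  rw [hdeficit, abs_of_nonpos (by linarith), one_div]
  linarith
end
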